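/- arXiv:1503.03603 — 6 statements merged into one kernel-verified Lean document; each statement's English description precedes it below -/
import Mathlib

section
/- Let α ∈ ℕ^n and let I ⊂ S = K[x_1,…,x_n] be a monomial ideal. Then I is polymatroidal if and only if its expansion I^α ⊂ S^α is polymatroidal. -/
/-!
Statement 0: a monomial ideal `I ⊆ K[x₁,…,xₙ]` is polymatroidal iff its
expansion `I^α` is polymatroidal.  A monomial ideal is encoded by its (finite,
nonempty) minimal monomial generating set `B` of exponent vectors, minimality
meaning that `B` is an antichain with respect to divisibility (the pointwise
order on exponent vectors).  The minimal generating set of the expansion `I^α`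
is then exactly `expandSet α B = {w | π₀ w ∈ B}`.
-/

/-- `π₀`: sum the exponents over the copies of each variable. -/
def pi0 {σ : Type*} [Fintype σ] (α : σ → ℕ) (w : ((i : σ) × Fin (α i)) → ℕ) : σ → ℕ :=
  fun i => ∑ j : Fin (α i), w ⟨i, j⟩

/-- The expansion of a set of exponent vectors with respect to `α`. -/
def expandSet {σ : Type*} [Fintype σ] (α : σ → ℕ) (B : Set (σ → ℕ)) :
    Set (((i : σ) × Fin (α i)) → ℕ) := {w | pi0 α w ∈ B}

/-- The exponent vector of `x_j · (u / x_i)`, i.e. `u - ε_i + ε_j`. -/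
def expSwap {σ : Type*} [DecidableEq σ] (u : σ → ℕ) (i j : σ) : σ → ℕ :=
  fun s => u s - (if s = i then 1 else 0) + (if s = j then 1 else 0)

/-- A monomial ideal, encoded by its minimal generating set `B` of exponent
vectors, is polymatroidal if all generators have the same degree and the
exchange property holds. -/
def Polymatroidal {σ : Type*} [Fintype σ] [DecidableEq σ] (B : Set (σ → ℕ)) : Prop :=
  (∀ u ∈ B, ∀ v ∈ B, ∑ s, u s = ∑ s, v s) ∧
  ∀ u ∈ B, ∀ v ∈ B, ∀ i : σ, v i < u i →
    ∃ j : σ, u j < v j ∧ expSwap u i j ∈ B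

section Aux

variable {σ : Type*} [Fintype σ] [DecidableEq σ] {α : σ → ℕ}

lemma sum_ite_eq_sigma (α : σ → ℕ) (i : σ) (a : (j : σ) × Fin (α j)) :
    (∑ j : Fin (α i), (if (⟨i, j⟩ : (k : σ) × Fin (α k)) = a then (1:ℕ) else 0))
      = if i = a.1 then (1:ℕ) else 0 := by
  obtain ⟨a1, a2⟩ := a
  by_cases h : i = a1
  · subst h; simp [Sigma.mk.inj_iff]
  · simp [Sigma.mk.inj_iff, h]

lemma pi0_expSwap (w : ((i : σ) × Fin (α i)) → ℕ) (a b : (i : σ) × Fin (α i))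
    (h : 0 < w a) :
    pi0 α (expSwap w a b) = expSwap (pi0 α w) a.1 b.1 := by
  funext i
  unfold pi0 expSwap
  rw [Finset.sum_add_distrib, Finset.sum_tsub_distrib, sum_ite_eq_sigma, sum_ite_eq_sigma]
  intro x _
  by_cases hx : (⟨i, x⟩ : (k : σ) × Fin (α k)) = a
  · subst hx; simpa [Nat.one_le_iff_ne_zero, Nat.pos_iff_ne_zero] using h
  · simp [hx]

lemma sum_pi0 (w : ((i : σ) × Fin (α i)) → ℕ) :
    ∑ i, pi0 α w i = ∑ s, w s := by
  unfold pi0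
  rw [← Finset.univ_sigma_univ, Finset.sum_sigma]

/-- Lift of an exponent vector, putting everything on the `0`-th copy. -/
def liftVec (α : σ → ℕ) (hα : ∀ i, 0 < α i) (u : σ → ℕ) :
    ((i : σ) × Fin (α i)) → ℕ :=
  fun s => if s.2 = ⟨0, hα s.1⟩ then u s.1 else 0

lemma pi0_liftVec (hα : ∀ i, 0 < α i) (u : σ → ℕ) :
    pi0 α (liftVec α hα u) = u := by
  funext i
  unfold pi0 liftVec
  rw [Finset.sum_ite_eq' Finset.univ (⟨0, hα i⟩ : Fin (α i)) (fun _ => u i)]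
  simp

end Aux

theorem polymatroidal_iff_expansion_polymatroidal
    (n : ℕ) (K : Type*) [Field K] (α : Fin n → ℕ) (hα : ∀ i, 0 < α i)
    (B : Set (Fin n → ℕ)) (hne : B.Nonempty) (hfin : B.Finite)
    (hmin : IsAntichain (· ≤ ·) B) :
    Polymatroidal B ↔ Polymatroidal (expandSet α B) := by
  constructor
  · rintro ⟨hdeg, hex⟩
    constructor
    · intro w hw w' hw'
      rw [← sum_pi0 w, ← sum_pi0 w']
      exact hdeg _ hw _ hw'
    · rintro w hw w' hw' ⟨a1, a2⟩ ha
      by_cases hc : pi0 α w' a1 < pi0 α w a1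
      · obtain ⟨k, hk, hkB⟩ := hex _ hw _ hw' a1 hc
        have hex2 : ∃ l : Fin (α k), w ⟨k, l⟩ < w' ⟨k, l⟩ := by
          by_contra hcon
          push_neg at hcon
          exact absurd (Finset.sum_le_sum (fun l _ => hcon l)) (not_le.mpr hk)
        obtain ⟨l, hl⟩ := hex2
        refine ⟨⟨k, l⟩, hl, ?_⟩
        show pi0 α (expSwap w ⟨a1, a2⟩ ⟨k, l⟩) ∈ B
        rw [pi0_expSwap w ⟨a1, a2⟩ ⟨k, l⟩ (lt_of_le_of_lt (Nat.zero_le _) ha)]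
        exact hkB
      · push_neg at hc
        have hex2 : ∃ l : Fin (α a1), w ⟨a1, l⟩ < w' ⟨a1, l⟩ := by
          by_contra hcon
          push_neg at hcon
          have hlt : (∑ j : Fin (α a1), w' ⟨a1, j⟩) < ∑ j : Fin (α a1), w ⟨a1, j⟩ :=
            Finset.sum_lt_sum (fun j _ => hcon j) ⟨a2, Finset.mem_univ _, ha⟩
          exact absurd hc (not_le.mpr hlt)
        obtain ⟨l, hl⟩ := hex2
        refine ⟨⟨a1, l⟩, hl, ?_⟩
        show pi0 α (expSwap w ⟨a1, a2⟩ ⟨a1, l⟩) ∈ B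
        rw [pi0_expSwap w ⟨a1, a2⟩ ⟨a1, l⟩ (lt_of_le_of_lt (Nat.zero_le _) ha)]
        have h1 : 1 ≤ pi0 α w a1 :=
          le_trans (lt_of_le_of_lt (Nat.zero_le _) ha) (Finset.single_le_sum (f := fun j => w ⟨a1, j⟩)
            (fun _ _ => Nat.zero_le _) (Finset.mem_univ a2))
        have heq : expSwap (pi0 α w) a1 a1 = pi0 α w := by
          funext s
          unfold expSwap
          by_cases hs : s = a1 <;> simp [hs] <;> omega
        rw [heq]
        exact hw
  · rintro ⟨hdeg, hex⟩
    have hmem : ∀ u ∈ B, liftVec α hα u ∈ expandSet α B := by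
      intro u hu
      show pi0 α (liftVec α hα u) ∈ B
      rwa [pi0_liftVec]
    constructor
    · intro u hu v hv
      have := hdeg _ (hmem u hu) _ (hmem v hv)
      rw [← sum_pi0 (liftVec α hα u), ← sum_pi0 (liftVec α hα v),
        pi0_liftVec, pi0_liftVec] at this
      exact this
    · intro u hu v hv i hi
      have hlt : liftVec α hα v ⟨i, ⟨0, hα i⟩⟩ < liftVec α hα u ⟨i, ⟨0, hα i⟩⟩ := by
        simpa [liftVec] using hi
      obtain ⟨⟨k, l⟩, hkl, hklB⟩ :=
        hex _ (hmem u hu) _ (hmem v hv) ⟨i, ⟨0, hα i⟩⟩ hlt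
      have hl0 : l = ⟨0, hα k⟩ := by
        by_contra hh
        simp [liftVec, hh] at hkl
      subst hl0
      have huk : u k < v k := by simpa [liftVec] using hkl
      refine ⟨k, huk, ?_⟩
      have hpos : 0 < liftVec α hα u ⟨i, ⟨0, hα i⟩⟩ := by
        simp [liftVec]; omega
      have hB : pi0 α (expSwap (liftVec α hα u) ⟨i, ⟨0, hα i⟩⟩ ⟨k, ⟨0, hα k⟩⟩) ∈ B := hklB
      rwa [pi0_expSwap _ _ _ hpos, pi0_liftVec] at hB
end

section
/- Let P be a discrete polymatroid on [n] and α ∈ ℕ^n. Then γ(I_{P^α}) = I_P, where γ : S_{P^α} → S_P is the K-algebra homomorphism defined by γ(y_u) = y_{π₀(u)}. -/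
/-!
Statement 3: for a discrete polymatroid `P` on `[n]` and `α ∈ ℕⁿ`,
`γ(I_{P^α}) = I_P`, where `γ : S_{P^α} → S_P` is the `K`-algebra homomorphism
with `γ(y_u) = y_{π₀(u)}`.  The bases of the expansion `P^α` are exactly the
vectors `w` with `π₀(w) ∈ B_P`.
-/

open MvPolynomial

/-- `u + ε_i`. -/
def addOne {σ : Type*} [DecidableEq σ] (u : σ → ℕ) (i : σ) : σ → ℕ :=
  fun s => u s + (if s = i then 1 else 0)

/-- A discrete polymatroid on the ground set `σ`: a nonempty finite set of
integer vectors which is a lower set and satisfies the augmentation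
property (D2). -/
def IsDiscretePolymatroid {σ : Type*} [Fintype σ] [DecidableEq σ] (P : Set (σ → ℕ)) : Prop :=
  P.Nonempty ∧ P.Finite ∧
  (∀ u ∈ P, ∀ v : σ → ℕ, v ≤ u → v ∈ P) ∧
  (∀ u ∈ P, ∀ v ∈ P, ∑ i, u i < ∑ i, v i → ∃ i, u i < v i ∧ addOne u i ∈ P)

/-- The set of bases (maximal elements) of a discrete polymatroid. -/
def bases {σ : Type*} (P : Set (σ → ℕ)) : Set (σ → ℕ) :=
  {u | u ∈ P ∧ ∀ v ∈ P, u ≤ v → u = v}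

/-- The `K`-algebra map `S_B → K[x]`, `y_u ↦ x^u`, whose kernel is the toric
ideal of the set of vectors `B`. -/
noncomputable def toricHom (K : Type*) [Field K] {σ : Type*} [Fintype σ] (B : Set (σ → ℕ)) :
    MvPolynomial B K →ₐ[K] MvPolynomial σ K :=
  aeval (fun u : B => monomial (Finsupp.equivFunOnFinite.symm u.1) (1 : K))

/-- The toric ideal of a set of exponent vectors. -/
noncomputable def toricIdeal (K : Type*) [Field K] {σ : Type*} [Fintype σ] (B : Set (σ → ℕ)) :
    Ideal (MvPolynomial B K) :=
  RingHom.ker (toricHom K B).toRingHom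

/-- `γ : S_{P^α} → S_P`, the `K`-algebra map with `γ(y_u) = y_{π₀(u)}`. -/
noncomputable def gammaHom (K : Type*) [Field K] {σ : Type*} [Fintype σ]
    (α : σ → ℕ) (B : Set (σ → ℕ)) :
    MvPolynomial (expandSet α B) K →ₐ[K] MvPolynomial B K :=
  MvPolynomial.rename (fun w : expandSet α B => (⟨pi0 α w.1, w.2⟩ : B))


section GammaAux

variable {n : ℕ} (α : Fin n → ℕ)

lemma mapDomain_fst (w : ((i : Fin n) × Fin (α i)) → ℕ) :
    Finsupp.mapDomain Sigma.fst (Finsupp.equivFunOnFinite.symm w)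
      = Finsupp.equivFunOnFinite.symm (pi0 α w) := by
  ext i
  rw [Finsupp.mapDomain, Finsupp.sum_fintype]
  · rw [← Finset.univ_sigma_univ, Finset.sum_sigma]
    simp [Finsupp.single_apply, pi0, Finset.sum_ite_irrel, Finset.sum_ite_eq']
  · simp

def sFun (hα : ∀ i, 0 < α i) (u : Fin n → ℕ) : ((i : Fin n) × Fin (α i)) → ℕ :=
  fun a => if a.2 = ⟨0, hα a.1⟩ then u a.1 else 0

lemma pi0_sFun (hα : ∀ i, 0 < α i) (u : Fin n → ℕ) : pi0 α (sFun α hα u) = u := by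
  funext i
  simp only [pi0, sFun]
  rw [Finset.sum_eq_single (⟨0, hα i⟩ : Fin (α i))]
  · simp
  · intro b _ hb; simp [hb]
  · simp

def emb (hα : ∀ i, 0 < α i) : Fin n → (i : Fin n) × Fin (α i) := fun i => ⟨i, ⟨0, hα i⟩⟩

lemma emb_inj (hα : ∀ i, 0 < α i) : Function.Injective (emb α hα) := by
  intro a b h
  exact congrArg Sigma.fst h

lemma mapDomain_emb (hα : ∀ i, 0 < α i) (u : Fin n → ℕ) :
    Finsupp.mapDomain (emb α hα) (Finsupp.equivFunOnFinite.symm u)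
      = Finsupp.equivFunOnFinite.symm (sFun α hα u) := by
  ext ⟨i0, j⟩
  by_cases hj : j = ⟨0, hα i0⟩
  · subst hj
    have : (⟨i0, ⟨0, hα i0⟩⟩ : (i : Fin n) × Fin (α i)) = emb α hα i0 := rfl
    rw [this, Finsupp.mapDomain_apply (emb_inj α hα)]
    simp [sFun, emb]
  · rw [Finsupp.mapDomain_notin_range]
    · simp [sFun, hj]
    · rintro ⟨i, hi⟩
      obtain ⟨rfl, h2⟩ := Sigma.mk.inj_iff.mp hi
      exact hj (eq_of_heq h2).symm

variable (K : Type*) [Field K] (B : Set (Fin n → ℕ))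

lemma comp1 :
    (toricHom K B).comp (gammaHom K α B)
      = (MvPolynomial.rename (Sigma.fst : ((i : Fin n) × Fin (α i)) → Fin n)).comp
          (toricHom K (expandSet α B)) := by
  apply MvPolynomial.algHom_ext
  intro w
  simp [toricHom, gammaHom, rename_monomial, mapDomain_fst]

noncomputable def secHom (hα : ∀ i, 0 < α i) :
    MvPolynomial B K →ₐ[K] MvPolynomial (expandSet α B) K :=
  MvPolynomial.rename (fun u : B =>
    (⟨sFun α hα u.1, show pi0 α (sFun α hα u.1) ∈ B by rw [pi0_sFun]; exact u.2⟩ : expandSet α B))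

lemma comp2 (hα : ∀ i, 0 < α i) :
    (toricHom K (expandSet α B)).comp (secHom α K B hα)
      = (MvPolynomial.rename (emb α hα)).comp (toricHom K B) := by
  apply MvPolynomial.algHom_ext
  intro u
  simp [toricHom, secHom, rename_monomial, mapDomain_emb]

lemma gamma_sec (hα : ∀ i, 0 < α i) (q : MvPolynomial B K) :
    gammaHom K α B (secHom α K B hα q) = q := by
  rw [gammaHom, secHom, rename_rename]
  have h : ((fun w : expandSet α B => (⟨pi0 α w.1, w.2⟩ : B)) ∘
      (fun u : B => (⟨sFun α hα u.1, show pi0 α (sFun α hα u.1) ∈ B by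
          rw [pi0_sFun]; exact u.2⟩ : expandSet α B))) = id :=
    funext fun u => Subtype.ext (pi0_sFun α hα u.1)
  rw [h]
  exact rename_id_apply q

end GammaAux

theorem gamma_image_toricIdeal_expansion
    (n : ℕ) (K : Type*) [Field K] (α : Fin n → ℕ) (hα : ∀ i, 0 < α i)
    (P : Set (Fin n → ℕ)) (hP : IsDiscretePolymatroid P) :
    gammaHom K α (bases P) '' (toricIdeal K (expandSet α (bases P)) : Set _)
      = (toricIdeal K (bases P) : Set _) := by
  ext q
  simp only [Set.mem_image, SetLike.mem_coe, toricIdeal, RingHom.mem_ker,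
    AlgHom.toRingHom_eq_coe, RingHom.coe_coe]
  constructor
  · rintro ⟨p, hp, rfl⟩
    have h := congrArg (fun φ : MvPolynomial (expandSet α (bases P)) K →ₐ[K]
        MvPolynomial (Fin n) K => φ p) (comp1 α K (bases P))
    simp only [AlgHom.comp_apply] at h
    rw [h, hp, map_zero]
  · intro hq
    refine ⟨secHom α K (bases P) hα q, ?_, gamma_sec α K (bases P) hα q⟩
    have h := congrArg (fun φ : MvPolynomial (bases P) K →ₐ[K]
        MvPolynomial ((i : Fin n) × Fin (α i)) K => φ q) (comp2 α K (bases P) hα)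
    simp only [AlgHom.comp_apply] at h
    rw [h, hq, map_zero]
end

section
/- Let α ∈ ℕ^n and let M be a matroid on [n]. If M satisfies White's conjecture (i.e., the toric ideal I_M is generated by the quadratic binomials corresponding to double swaps), then the expansion M^α also satisfies White's conjecture. -/
/-!
Statement 5: if a matroid `M` on `[n]` (regarded as a discrete polymatroid
whose bases are `(0,1)`-vectors) satisfies White's conjecture — i.e. its toric
ideal `I_M` is generated by the quadratic binomials corresponding to double
swaps — then the expansion `M^α` also satisfies White's conjecture.
-/

open MvPolynomial

/-- The quadratic binomials `y_{u₁} y_{u₂} - y_{v₁} y_{v₂}` corresponding to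
double swaps: `v₁ = u₁ + ε_j - ε_i`, `v₂ = u₂ + ε_i - ε_j` for some `i, j`
with `u₁(i) > u₂(i)` and `u₂(j) > u₁(j)`. -/
def doubleSwapBinomials (K : Type*) [Field K] {σ : Type*} [Fintype σ] [DecidableEq σ]
    (B : Set (σ → ℕ)) : Set (MvPolynomial B K) :=
  {f | ∃ (u₁ u₂ v₁ v₂ : B) (i j : σ),
    u₂.1 i < u₁.1 i ∧ u₁.1 j < u₂.1 j ∧
    v₁.1 = expSwap u₁.1 i j ∧ v₂.1 = expSwap u₂.1 j i ∧
    f = X u₁ * X u₂ - X v₁ * X v₂}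
set_option linter.unusedSectionVars false
section Gen
open MvPolynomial Relation
variable {K : Type*} [Field K] {σ : Type*} [Fintype σ] [DecidableEq σ]

/-- One double-swap move on exponent vectors of `S_B`. -/
def SwapStep (B : Set (σ → ℕ)) (a b : ↥B →₀ ℕ) : Prop :=
  ∃ (u₁ u₂ v₁ v₂ : B) (i j : σ) (c : ↥B →₀ ℕ),
    u₂.1 i < u₁.1 i ∧ u₁.1 j < u₂.1 j ∧
    v₁.1 = expSwap u₁.1 i j ∧ v₂.1 = expSwap u₂.1 j i ∧
    a = Finsupp.single u₁ 1 + Finsupp.single u₂ 1 + c ∧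
    b = Finsupp.single v₁ 1 + Finsupp.single v₂ 1 + c

theorem SwapStep.add {B : Set (σ → ℕ)} {a b : ↥B →₀ ℕ} (h : SwapStep B a b) (d : ↥B →₀ ℕ) :
    SwapStep B (a + d) (b + d) := by
  obtain ⟨u₁, u₂, v₁, v₂, i, j, c, h1, h2, h3, h4, h5, h6⟩ := h
  exact ⟨u₁, u₂, v₁, v₂, i, j, c + d, h1, h2, h3, h4, by rw [h5, add_assoc], by rw [h6, add_assoc]⟩

/-- The exponent-sum map `a ↦ ∑ a(w) • w`. -/
noncomputable def AF (B : Set (σ → ℕ)) (a : ↥B →₀ ℕ) : σ →₀ ℕ :=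
  a.sum fun w c => c • Finsupp.equivFunOnFinite.symm (w.1 : σ → ℕ)

theorem AF_zero (B : Set (σ → ℕ)) : AF B 0 = 0 := Finsupp.sum_zero_index

theorem AF_add (B : Set (σ → ℕ)) (a b : ↥B →₀ ℕ) : AF B (a + b) = AF B a + AF B b := by
  classical
  exact Finsupp.sum_add_index' (fun w => by simp) (fun w c d => by rw [add_smul])

theorem AF_single (B : Set (σ → ℕ)) (w : B) (k : ℕ) :
    AF B (Finsupp.single w k) = k • Finsupp.equivFunOnFinite.symm (w.1 : σ → ℕ) := by
  classical
  exact Finsupp.sum_single_index (by simp)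

theorem toricHom_monomial (B : Set (σ → ℕ)) (a : ↥B →₀ ℕ) (c : K) :
    toricHom K B (monomial a c) = monomial (AF B a) c := by
  classical
  induction a using Finsupp.induction with
  | zero => simp [AF_zero, toricHom, aeval_monomial]
  | single_add w k a hw hk ih =>
    have : (monomial (Finsupp.single w k + a) c : MvPolynomial B K)
        = monomial (Finsupp.single w k) 1 * monomial a c := by
      rw [monomial_mul, one_mul]
    rw [this, map_mul, ih, ← X_pow_eq_monomial]
    rw [map_pow]
    have hx : toricHom K B (X w) = monomial (Finsupp.equivFunOnFinite.symm (w.1 : σ → ℕ)) 1 := by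
      simp [toricHom]
    rw [hx, monomial_pow, monomial_mul, one_pow, one_mul, AF_add, AF_single]

end Gen
section Gen2
open MvPolynomial Relation
variable {K : Type*} [Field K] {σ : Type*} [Fintype σ] [DecidableEq σ]

theorem expSwap_add_expSwap {u₁ u₂ : σ → ℕ} {i j : σ} (h1 : u₂ i < u₁ i) (h2 : u₁ j < u₂ j)
    (s : σ) : expSwap u₁ i j s + expSwap u₂ j i s = u₁ s + u₂ s := by
  have hij : i ≠ j := by rintro rfl; omega
  unfold expSwap
  rcases eq_or_ne s i with rfl | hsi <;> rcases eq_or_ne s j with rfl | hsj <;>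
    simp_all <;> omega

theorem X_mul_X (B : Set (σ → ℕ)) (u v : B) :
    (X u * X v : MvPolynomial B K)
      = monomial (Finsupp.single u 1 + Finsupp.single v 1) 1 := by
  rw [X, X, monomial_mul, one_mul]

theorem swapStep_diff_mem {B : Set (σ → ℕ)} {a b : ↥B →₀ ℕ} (h : SwapStep B a b) :
    (monomial a 1 - monomial b 1 : MvPolynomial B K)
      ∈ Ideal.span (doubleSwapBinomials K B) := by
  obtain ⟨u₁, u₂, v₁, v₂, i, j, c, h1, h2, h3, h4, rfl, rfl⟩ := h
  have key : (monomial (Finsupp.single u₁ 1 + Finsupp.single u₂ 1 + c) 1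
      - monomial (Finsupp.single v₁ 1 + Finsupp.single v₂ 1 + c) 1 : MvPolynomial B K)
      = monomial c 1 * (X u₁ * X u₂ - X v₁ * X v₂) := by
    rw [mul_sub, X_mul_X, X_mul_X, monomial_mul, monomial_mul, one_mul, add_comm c]
    rw [add_comm c]
  rw [key]
  exact Ideal.mul_mem_left _ _ (Ideal.subset_span
    ⟨u₁, u₂, v₁, v₂, i, j, h1, h2, h3, h4, rfl⟩)

theorem eqvGen_diff_mem {B : Set (σ → ℕ)} {a b : ↥B →₀ ℕ}
    (h : EqvGen (SwapStep B) a b) :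
    (monomial a 1 - monomial b 1 : MvPolynomial B K)
      ∈ Ideal.span (doubleSwapBinomials K B) := by
  induction h with
  | rel a b hab => exact swapStep_diff_mem hab
  | refl a => simp
  | symm a b _ ih => have := (Ideal.span (doubleSwapBinomials K B)).neg_mem ih; simpa using this
  | trans a b c _ _ ih1 ih2 => have := Ideal.add_mem _ ih1 ih2; simpa using this

theorem swaps_subset_ker (B : Set (σ → ℕ)) :
    doubleSwapBinomials K B ⊆ (toricIdeal K B : Set (MvPolynomial B K)) := by
  rintro f ⟨u₁, u₂, v₁, v₂, i, j, h1, h2, h3, h4, rfl⟩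
  have he : (Finsupp.equivFunOnFinite.symm (v₁.1 : σ → ℕ)
        + Finsupp.equivFunOnFinite.symm (v₂.1 : σ → ℕ) : σ →₀ ℕ)
      = Finsupp.equivFunOnFinite.symm (u₁.1 : σ → ℕ)
        + Finsupp.equivFunOnFinite.symm (u₂.1 : σ → ℕ) := by
    ext s
    simp only [Finsupp.add_apply, Finsupp.coe_equivFunOnFinite_symm]
    rw [h3, h4]
    exact expSwap_add_expSwap h1 h2 s
  show toricHom K B _ = 0
  rw [map_sub, X_mul_X, X_mul_X, toricHom_monomial, toricHom_monomial,
    AF_add, AF_add, AF_single, AF_single, AF_single, AF_single]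
  simp only [one_smul]
  rw [he, sub_self]

theorem exists_partner {B : Set (σ → ℕ)} {f : MvPolynomial B K}
    (hf : toricHom K B f = 0) {a : ↥B →₀ ℕ} (ha : a ∈ f.support) :
    ∃ b ∈ f.support, b ≠ a ∧ AF B b = AF B a := by
  classical
  have h1 : coeff (AF B a) (toricHom K B f) = 0 := by rw [hf]; simp
  have h2 : ∑ c ∈ f.support, (if AF B c = AF B a then coeff c f else 0) = 0 := by
    rw [as_sum f, map_sum] at h1
    simp_rw [toricHom_monomial, MvPolynomial.coeff_sum, coeff_monomial] at h1
    exact h1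
  by_contra hno
  push_neg at hno
  have hsum2 : ∑ c ∈ f.support, (if AF B c = AF B a then coeff c f else 0)
      = (if AF B a = AF B a then coeff a f else 0) :=
    Finset.sum_eq_single_of_mem a ha (fun c hc hca => if_neg (hno c hc hca))
  rw [if_pos rfl] at hsum2
  rw [hsum2] at h2
  exact (MvPolynomial.mem_support_iff.mp ha) h2

theorem ker_le_span (B : Set (σ → ℕ))
    (hconn : ∀ a b : ↥B →₀ ℕ, AF B a = AF B b → EqvGen (SwapStep B) a b) :
    ∀ (N : ℕ) (f : MvPolynomial B K), f.support.card ≤ N → toricHom K B f = 0 →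
      f ∈ Ideal.span (doubleSwapBinomials K B) := by
  classical
  intro N
  induction N with
  | zero =>
    intro f hcard hker
    have : f.support = ∅ := Finset.card_eq_zero.mp (Nat.le_zero.mp hcard)
    rw [MvPolynomial.support_eq_empty.mp this]
    exact Ideal.zero_mem _
  | succ N ih =>
    intro f hcard hker
    by_cases hf0 : f = 0
    · rw [hf0]; exact Ideal.zero_mem _
    · obtain ⟨a, ha⟩ := Finset.nonempty_of_ne_empty
        (fun h => hf0 (MvPolynomial.support_eq_empty.mp h))
      obtain ⟨b, hb, hba, hAF⟩ := exists_partner hker ha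
      set g : MvPolynomial B K := monomial a 1 - monomial b 1 with hg
      set f' : MvPolynomial B K := f - C (coeff a f) * g with hf'
      have hcoeffg : ∀ c, coeff c g = (if a = c then (1:K) else 0) - (if b = c then 1 else 0) := by
        intro c; rw [hg, coeff_sub, coeff_monomial, coeff_monomial]
      have homg : toricHom K B g = 0 := by
        rw [hg, map_sub, toricHom_monomial, toricHom_monomial, hAF, sub_self]
      have hker' : toricHom K B f' = 0 := by
        rw [hf', map_sub, map_mul, homg, mul_zero, sub_zero, hker]
      have hsupp' : f'.support ⊆ f.support.erase a := by
        intro c hc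
        rw [MvPolynomial.mem_support_iff] at hc
        have hcc : coeff c f' = coeff c f - coeff a f * coeff c g := by
          rw [hf', coeff_sub, coeff_C_mul]
        rcases eq_or_ne c a with rfl | hca
        · exfalso
          rw [hcc, hcoeffg, if_pos rfl, if_neg hba] at hc
          simp at hc
        · rw [Finset.mem_erase]
          refine ⟨hca, ?_⟩
          rw [MvPolynomial.mem_support_iff]
          intro hcf
          rw [hcc, hcf, hcoeffg, if_neg (fun h => hca h.symm)] at hc
          rcases eq_or_ne b c with rfl | hbc
          · exact (MvPolynomial.mem_support_iff.mp hb) hcf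
          · rw [if_neg hbc] at hc; simp at hc
      have hcard' : f'.support.card ≤ N := by
        have h1 : (f.support.erase a).card < f.support.card := Finset.card_erase_lt_of_mem ha
        have := Finset.card_le_card hsupp'
        omega
      have hf's : f' ∈ Ideal.span (doubleSwapBinomials K B) := ih f' hcard' hker'
      have hgs : g ∈ Ideal.span (doubleSwapBinomials K B) :=
        eqvGen_diff_mem (hconn a b hAF.symm)
      have : f = f' + C (coeff a f) * g := by rw [hf']; ring
      rw [this]
      exact Ideal.add_mem _ hf's (Ideal.mul_mem_left _ _ hgs)

end Gen2
section Gen3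
open MvPolynomial Relation
variable {K : Type*} [Field K] {σ : Type*} [Fintype σ] [DecidableEq σ]

theorem eqvGen_swapStep_add {B : Set (σ → ℕ)} {a b : ↥B →₀ ℕ}
    (h : Relation.EqvGen (SwapStep B) a b) (d : ↥B →₀ ℕ) :
    EqvGen (SwapStep B) (a + d) (b + d) := by
  induction h with
  | rel a b hab => exact .rel _ _ (hab.add d)
  | refl a => exact .refl _
  | symm a b _ ih => exact ih.symm _ _
  | trans a b c _ _ ih1 ih2 => exact ih1.trans _ _ _ ih2

/-- The double-swap equivalence is an additive congruence. -/
def swapCon (B : Set (σ → ℕ)) : AddCon (↥B →₀ ℕ) where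
  r := EqvGen (SwapStep B)
  iseqv := Relation.EqvGen.is_equivalence _
  add' {w x y z} h1 h2 := by
    have e1 : EqvGen (SwapStep B) (w + y) (x + y) := eqvGen_swapStep_add h1 y
    have e2 : EqvGen (SwapStep B) (x + y) (x + z) := by
      have := eqvGen_swapStep_add h2 x
      rwa [add_comm y x, add_comm z x] at this
    exact e1.trans _ _ _ e2

theorem span_diff_eqvGen {B : Set (σ → ℕ)} {a b : ↥B →₀ ℕ}
    (hmem : (monomial a 1 - monomial b 1 : MvPolynomial B K)
      ∈ Ideal.span (doubleSwapBinomials K B)) :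
    EqvGen (SwapStep B) a b := by
  classical
  set c : AddCon (↥B →₀ ℕ) := swapCon B with hc
  let φ : MvPolynomial B K →+* AddMonoidAlgebra K c.Quotient :=
    AddMonoidAlgebra.mapDomainRingHom K c.mk'
  have hφmono : ∀ (p : ↥B →₀ ℕ), φ (monomial p 1) = AddMonoidAlgebra.single (c.mk' p) (1 : K) := by
    intro p
    show AddMonoidAlgebra.mapDomainRingHom K c.mk' (monomial p (1:K)) = _
    rw [← single_eq_monomial]
    simp
  have hker : Ideal.span (doubleSwapBinomials K B) ≤ RingHom.ker φ := by
    rw [Ideal.span_le]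
    rintro f ⟨u₁, u₂, v₁, v₂, i, j, h1, h2, h3, h4, rfl⟩
    have hstep : SwapStep B (Finsupp.single u₁ 1 + Finsupp.single u₂ 1)
        (Finsupp.single v₁ 1 + Finsupp.single v₂ 1) :=
      ⟨u₁, u₂, v₁, v₂, i, j, 0, h1, h2, h3, h4, (add_zero _).symm, (add_zero _).symm⟩
    have hmk : c.mk' (Finsupp.single u₁ 1 + Finsupp.single u₂ 1)
        = c.mk' (Finsupp.single v₁ 1 + Finsupp.single v₂ 1) := by
      exact c.eq.mpr (Relation.EqvGen.rel _ _ hstep)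
    show φ _ = 0
    rw [X_mul_X, X_mul_X, map_sub, hφmono, hφmono, hmk, sub_self]
  have h0 : φ (monomial a 1 - monomial b 1) = 0 := hker hmem
  rw [map_sub, hφmono, hφmono, sub_eq_zero] at h0
  have hmk : c.mk' a = c.mk' b := by
    exact ((AddMonoidAlgebra.single_left_inj (one_ne_zero : (1:K) ≠ 0)).mp h0)
  exact c.eq.mp hmk

end Gen3
section Gen4
open MvPolynomial Relation
variable {K : Type*} [Field K] {σ : Type*} [Fintype σ] [DecidableEq σ]

theorem expSwap_expSwap (u : σ → ℕ) {i j : σ} (hij : i ≠ j) (hi : 1 ≤ u i) :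
    expSwap (expSwap u i j) j i = u := by
  funext s
  unfold expSwap
  rcases eq_or_ne s i with rfl | hsi <;> rcases eq_or_ne s j with rfl | hsj <;>
    simp_all <;> omega

theorem expSwap_add_expSwap' (x y : σ → ℕ) (t₁ t₂ : σ) (hx : 1 ≤ x t₁) (hy : 1 ≤ y t₂)
    (s : σ) : expSwap x t₁ t₂ s + expSwap y t₂ t₁ s = x s + y s := by
  unfold expSwap
  rcases eq_or_ne s t₁ with rfl | h1 <;> rcases eq_or_ne s t₂ with rfl | h2 <;>
    simp_all <;> omega

theorem expSwap_self (u : σ → ℕ) (i : σ) (h : 1 ≤ u i) : expSwap u i i = u := by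
  funext s
  unfold expSwap
  rcases eq_or_ne s i with rfl | hs <;> simp_all

theorem swapStep_symm {B : Set (σ → ℕ)} (h01 : ∀ u ∈ B, ∀ i, u i ≤ 1)
    {a b : ↥B →₀ ℕ} (h : SwapStep B a b) : SwapStep B b a := by
  obtain ⟨u₁, u₂, v₁, v₂, i, j, c, h1, h2, h3, h4, h5, h6⟩ := h
  have hij : i ≠ j := by rintro rfl; omega
  have hu1i : u₁.1 i = 1 := le_antisymm (h01 _ u₁.2 i) (by omega)
  have hu2i : u₂.1 i = 0 := by have := h01 _ u₁.2 i; omega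
  have hu2j : u₂.1 j = 1 := le_antisymm (h01 _ u₂.2 j) (by omega)
  have hu1j : u₁.1 j = 0 := by have := h01 _ u₂.2 j; omega
  have hv1i : v₁.1 i = 0 := by rw [h3]; unfold expSwap; simp [hij]; omega
  have hv1j : v₁.1 j = 1 := by rw [h3]; unfold expSwap; simp [Ne.symm hij]; omega
  have hv2i : v₂.1 i = 1 := by rw [h4]; unfold expSwap; simp [hij]; omega
  have hv2j : v₂.1 j = 0 := by rw [h4]; unfold expSwap; simp [Ne.symm hij]; omega
  refine ⟨v₁, v₂, u₁, u₂, j, i, c, by omega, by omega, ?_, ?_, h6, h5⟩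
  · rw [h3, expSwap_expSwap u₁.1 hij (by omega)]
  · rw [h4, expSwap_expSwap u₂.1 (Ne.symm hij) (by omega)]

theorem eqvGen_of_symm {X : Type*} {r : X → X → Prop} (hsymm : ∀ a b, r a b → r b a)
    {a b : X} (h : Relation.EqvGen r a b) : Relation.ReflTransGen r a b := by
  induction h with
  | rel a b hab => exact Relation.ReflTransGen.single hab
  | refl a => exact Relation.ReflTransGen.refl
  | symm a b _ ih => exact Relation.ReflTransGen.mono (fun x y h => hsymm y x h) _ _ (Relation.ReflTransGen.swap _ _ ih)
  | trans a b c _ _ ih1 ih2 => exact ih1.trans ih2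

theorem mapDomain_apply_eq {X Y : Type*} [DecidableEq Y] (f : X → Y) (a : X →₀ ℕ) (u : Y) :
    Finsupp.mapDomain f a u = ∑ x ∈ a.support, if f x = u then a x else 0 := by
  classical
  rw [Finsupp.mapDomain, Finsupp.sum_apply, Finsupp.sum]
  exact Finset.sum_congr rfl fun x _ => Finsupp.single_apply

theorem mapDomain_apply_ne_zero {X Y : Type*} [DecidableEq Y] {f : X → Y} {a : X →₀ ℕ}
    {w : X} (hw : w ∈ a.support) : Finsupp.mapDomain f a (f w) ≠ 0 := by
  classical
  rw [mapDomain_apply_eq]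
  have : (if f w = f w then a w else 0) ≤ ∑ x ∈ a.support, if f x = f w then a x else 0 :=
    Finset.single_le_sum (f := fun x => if f x = f w then a x else 0)
      (fun _ _ => Nat.zero_le _) hw
  rw [if_pos rfl] at this
  have hw' := Finsupp.mem_support_iff.mp hw
  omega

theorem exists_preimage_of_mapDomain {X Y : Type*} [DecidableEq Y] {f : X → Y} {a : X →₀ ℕ}
    {u : Y} (h : Finsupp.mapDomain f a u ≠ 0) : ∃ x ∈ a.support, f x = u := by
  classical
  have := Finsupp.mapDomain_support (f := f) (s := a)
  have hu : u ∈ (Finsupp.mapDomain f a).support := Finsupp.mem_support_iff.mpr h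
  have := this hu
  simpa using Finset.mem_image.mp this

theorem AF_apply {B : Set (σ → ℕ)} (a : ↥B →₀ ℕ) (s : σ) :
    AF B a s = ∑ w ∈ a.support, a w * (w.1 : σ → ℕ) s := by
  classical
  rw [AF, Finsupp.sum_apply, Finsupp.sum]
  exact Finset.sum_congr rfl fun w _ => by
    simp [Finsupp.smul_apply]

theorem le_AF_of_mem_support {B : Set (σ → ℕ)} {a : ↥B →₀ ℕ} {w : ↥B}
    (hw : w ∈ a.support) (s : σ) : (w.1 : σ → ℕ) s ≤ AF B a s := by
  classical
  rw [AF_apply]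
  have h1 : a w * (w.1 : σ → ℕ) s ≤ ∑ x ∈ a.support, a x * (x.1 : σ → ℕ) s :=
    Finset.single_le_sum (f := fun x => a x * (x.1 : σ → ℕ) s)
      (fun _ _ => Nat.zero_le _) hw
  have hw' := Finsupp.mem_support_iff.mp hw
  have : (w.1 : σ → ℕ) s ≤ a w * (w.1 : σ → ℕ) s := Nat.le_mul_of_pos_left _ (by omega)
  omega

theorem exists_support_entry_pos {B : Set (σ → ℕ)} {a : ↥B →₀ ℕ} {s : σ}
    (h : AF B a s ≠ 0) : ∃ w ∈ a.support, (w.1 : σ → ℕ) s ≠ 0 := by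
  classical
  by_contra hno
  push_neg at hno
  rw [AF_apply] at h
  exact h (Finset.sum_eq_zero fun w hw => by rw [hno w hw, mul_zero])

/-- Decompose a finsupp with two distinct elements of positive value. -/
theorem two_decomp {X : Type*} [DecidableEq X] {a : X →₀ ℕ} {w₁ w₂ : X}
    (h1 : a w₁ ≠ 0) (h2 : a w₂ ≠ 0) (hne : w₁ ≠ w₂) :
    a = Finsupp.single w₁ 1 + Finsupp.single w₂ 1
        + (a - Finsupp.single w₁ 1 - Finsupp.single w₂ 1) := by
  have h1' := h1
  have h2' := h2
  ext x
  simp only [Finsupp.add_apply, Finsupp.tsub_apply, Finsupp.single_apply]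
  split_ifs with hx1 hx2 hx2
  · exact absurd (hx1.trans hx2.symm) hne
  · subst hx1; omega
  · subst hx2; omega
  · omega

theorem one_decomp {X : Type*} [DecidableEq X] {a : X →₀ ℕ} {w : X} (h1 : a w ≠ 0) :
    a = Finsupp.single w 1 + (a - Finsupp.single w 1) := by
  have h1' := h1
  ext x
  simp only [Finsupp.add_apply, Finsupp.tsub_apply, Finsupp.single_apply]
  split_ifs with hx
  · subst hx; omega
  · omega

noncomputable def degF {X : Type*} (a : X →₀ ℕ) : ℕ := a.sum fun _ c => c

theorem degF_mapDomain {X Y : Type*} (f : X → Y) (a : X →₀ ℕ) :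
    degF (Finsupp.mapDomain f a) = degF a := by
  classical
  rw [degF, degF, Finsupp.sum_mapDomain_index (by simp) (by simp)]

theorem eq_zero_of_degF {X : Type*} {a : X →₀ ℕ} (h : degF a = 0) : a = 0 := by
  classical
  by_contra h0
  obtain ⟨w, hw⟩ := Finsupp.ne_iff.mp h0
  simp only [Finsupp.coe_zero, Pi.zero_apply] at hw
  have h1 : a w ≤ degF a :=
    Finset.single_le_sum (f := fun x => a x) (fun _ _ => Nat.zero_le _)
      (Finsupp.mem_support_iff.mpr hw)
  omega

theorem degF_add {X : Type*} (a b : X →₀ ℕ) : degF (a + b) = degF a + degF b := by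
  classical
  rw [degF, degF, degF, Finsupp.sum_add_index' (fun _ => rfl) (fun _ _ _ => rfl)]

theorem degF_single {X : Type*} (w : X) (k : ℕ) : degF (Finsupp.single w k) = k := by
  classical
  rw [degF, Finsupp.sum_single_index rfl]

theorem sum_pos_exists {X : Type*} [Fintype X] {f : X → ℕ} (h : 1 ≤ ∑ x : X, f x) :
    ∃ x, 1 ≤ f x := by
  by_contra hno
  push_neg at hno
  have : ∑ x : X, f x = 0 := Finset.sum_eq_zero fun x _ => by have := hno x; omega
  omega

end Gen4
section Gen5
open MvPolynomial Relation
variable {n : ℕ} {α : Fin n → ℕ} {M : Set (Fin n → ℕ)}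

/-- The projection from expansion bases to matroid bases. -/
def projE (α : Fin n → ℕ) (M : Set (Fin n → ℕ)) (w : ↥(expandSet α (bases M))) :
    ↥(bases M) := ⟨pi0 α w.1, w.2⟩

theorem entry_le_pi0 (w : ((i : Fin n) × Fin (α i)) → ℕ) (i : Fin n) (j : Fin (α i)) :
    w ⟨i, j⟩ ≤ pi0 α w i :=
  Finset.single_le_sum (f := fun j' => w ⟨i, j'⟩) (fun _ _ => Nat.zero_le _)
    (Finset.mem_univ j)

theorem pair_le_pi0 (w : ((i : Fin n) × Fin (α i)) → ℕ) (i : Fin n) {j j' : Fin (α i)}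
    (h : j ≠ j') : w ⟨i, j⟩ + w ⟨i, j'⟩ ≤ pi0 α w i := by
  classical
  have hsub : ({j, j'} : Finset (Fin (α i))) ⊆ Finset.univ := Finset.subset_univ _
  have := Finset.sum_le_sum_of_subset (f := fun j'' => w ⟨i, j''⟩) hsub
  rwa [Finset.sum_pair h] at this

theorem entry_le_one (hmat : ∀ u ∈ bases M, ∀ i, u i ≤ 1)
    (w : ↥(expandSet α (bases M))) (t : (i : Fin n) × Fin (α i)) : w.1 t ≤ 1 := by
  obtain ⟨i, j⟩ := t
  exact le_trans (entry_le_pi0 w.1 i j) (hmat _ w.2 i)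

theorem sum_ind (s : Fin n) (t : (i : Fin n) × Fin (α i)) :
    ∑ j' : Fin (α s), (if (⟨s, j'⟩ : (i : Fin n) × Fin (α i)) = t then 1 else 0)
      = if s = t.1 then (1:ℕ) else 0 := by
  classical
  obtain ⟨i, j⟩ := t
  rcases eq_or_ne s i with rfl | hs
  · simp only [Sigma.mk.inj_iff, heq_eq_eq, true_and, if_pos rfl]
    rw [Finset.sum_ite_eq' Finset.univ j (fun _ => (1:ℕ))]
    simp
  · simp only [Sigma.mk.inj_iff, hs, false_and, if_neg, if_false]
    simp [hs]

theorem pi0_expSwap_s5 (w : ((i : Fin n) × Fin (α i)) → ℕ) (t₁ t₂ : (i : Fin n) × Fin (α i))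
    (h : 1 ≤ w t₁) :
    pi0 α (expSwap w t₁ t₂) = expSwap (pi0 α w) t₁.1 t₂.1 := by
  classical
  funext s
  have hterm : ∀ x : (i : Fin n) × Fin (α i),
      expSwap w t₁ t₂ x + (if x = t₁ then 1 else 0)
        = w x + (if x = t₂ then 1 else 0) := by
    intro x
    unfold expSwap
    rcases eq_or_ne x t₁ with rfl | h1 <;> rcases eq_or_ne x t₂ with rfl | h2 <;>
      simp_all <;> omega
  have hsum : pi0 α (expSwap w t₁ t₂) s + (if s = t₁.1 then 1 else 0)
      = pi0 α w s + (if s = t₂.1 then 1 else 0) := by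
    unfold pi0
    rw [← sum_ind s t₁, ← sum_ind s t₂, ← Finset.sum_add_distrib, ← Finset.sum_add_distrib]
    exact Finset.sum_congr rfl fun j' _ => hterm ⟨s, j'⟩
  have hcol : 1 ≤ pi0 α w t₁.1 := by
    obtain ⟨i1, j1⟩ := t₁
    exact le_trans h (entry_le_pi0 w i1 j1)
  have hcol' : (if s = t₁.1 then 1 else 0 : ℕ) ≤ pi0 α w s := by
    split_ifs with h1
    · exact h1 ▸ hcol
    · exact Nat.zero_le _
  show pi0 α (expSwap w t₁ t₂) s
      = pi0 α w s - (if s = t₁.1 then 1 else 0) + (if s = t₂.1 then 1 else 0)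
  by_cases h1 : s = t₁.1 <;> by_cases h2 : s = t₂.1 <;>
    simp only [h1, h2, eq_self_iff_true, if_true, if_false] at hsum hcol' ⊢ <;> omega

/-- Hamming-type distance between exponent vectors. -/
noncomputable def distT (x y : ((i : Fin n) × Fin (α i)) → ℕ) : ℕ :=
  ∑ t, ((x t - y t) + (y t - x t))

theorem distT_eq_zero {x y : ((i : Fin n) × Fin (α i)) → ℕ} (h : distT (α := α) x y = 0) :
    x = y := by
  classical
  funext t
  rw [distT] at h
  have := Finset.sum_eq_zero_iff.mp h t (Finset.mem_univ t)
  omega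

theorem sum_split_two {X : Type*} [Fintype X] [DecidableEq X] (F : X → ℕ) {t₁ t₂ : X}
    (h : t₁ ≠ t₂) :
    ∑ t, F t = F t₁ + F t₂ + ∑ t ∈ (Finset.univ.erase t₁).erase t₂, F t := by
  rw [← Finset.add_sum_erase _ F (Finset.mem_univ t₁),
    ← Finset.add_sum_erase _ F (Finset.mem_erase.mpr ⟨Ne.symm h, Finset.mem_univ t₂⟩)]
  ring

end Gen5
section Gen6
open MvPolynomial Relation Finsupp
variable {n : ℕ} {α : Fin n → ℕ} {M : Set (Fin n → ℕ)}

theorem reach (hmat : ∀ u ∈ bases M, ∀ i, u i ≤ 1) :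
    ∀ (d : ℕ) (b : ↥(expandSet α (bases M)) →₀ ℕ) (w z : ↥(expandSet α (bases M))),
      z ∈ b.support → projE α M z = projE α M w →
      (∀ t, (w.1 : _ → ℕ) t ≤ AF (expandSet α (bases M)) b t) →
      distT (α := α) w.1 z.1 ≤ d →
      ∃ b', Relation.EqvGen (SwapStep (expandSet α (bases M))) b b' ∧
        Finsupp.mapDomain (projE α M) b' = Finsupp.mapDomain (projE α M) b ∧
        AF (expandSet α (bases M)) b' = AF (expandSet α (bases M)) b ∧ w ∈ b'.support := by
  intro d
  induction d with
  | zero =>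
    intro b w z hz hproj _ hd
    have hwz : z = w := Subtype.ext (distT_eq_zero (Nat.le_zero.mp hd)).symm
    exact ⟨b, Relation.EqvGen.refl _, rfl, rfl, hwz ▸ hz⟩
  | succ d ih =>
    intro b w z hz hproj hW hd
    by_cases hwz : z = w
    · exact ⟨b, Relation.EqvGen.refl _, rfl, rfl, hwz ▸ hz⟩
    have hpi : pi0 α z.1 = pi0 α w.1 := congrArg Subtype.val hproj
    have w01 : ∀ t, w.1 t ≤ 1 := entry_le_one hmat w
    have z01 : ∀ t, z.1 t ≤ 1 := entry_le_one hmat z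
    have hpw1 : ∀ i, pi0 α w.1 i ≤ 1 := hmat (pi0 α w.1) (projE α M w).2
    have hpz1 : ∀ i, pi0 α z.1 i ≤ 1 := hmat (pi0 α z.1) (projE α M z).2
    have hne : w.1 ≠ z.1 := fun hh => hwz (Subtype.ext hh.symm)
    obtain ⟨t0, ht0⟩ := Function.ne_iff.mp hne
    obtain ⟨i, j₀⟩ := t0
    -- find a copy jj where w is 1 and z is 0
    have hkey : ∃ jj : Fin (α i), w.1 ⟨i, jj⟩ = 1 ∧ z.1 ⟨i, jj⟩ = 0 := by
      rcases lt_or_gt_of_ne ht0 with hlt | hgt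
      · have hz1 : z.1 ⟨i, j₀⟩ = 1 := le_antisymm (z01 _) (by omega)
        have h1 : 1 ≤ pi0 α w.1 i := by
          have := entry_le_pi0 z.1 i j₀; rw [hpi] at this; omega
        obtain ⟨jj, hjj⟩ := sum_pos_exists (f := fun j => w.1 ⟨i, j⟩) h1
        have hwjj : w.1 ⟨i, jj⟩ = 1 := le_antisymm (w01 _) hjj
        have hjne : jj ≠ j₀ := fun hh => by rw [hh] at hwjj; omega
        have hzjj : z.1 ⟨i, jj⟩ = 0 := by
          have := pair_le_pi0 z.1 i hjne
          have := hpz1 i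
          omega
        exact ⟨jj, hwjj, hzjj⟩
      · have := w01 ⟨i, j₀⟩
        exact ⟨j₀, le_antisymm (w01 _) (by omega), by omega⟩
    obtain ⟨jj, hwjj, hzjj⟩ := hkey
    -- find the copy j' where z is 1
    have hpzi : 1 ≤ pi0 α z.1 i := by
      have := entry_le_pi0 w.1 i jj; rw [← hpi] at this; omega
    obtain ⟨j', hj'⟩ := sum_pos_exists (f := fun j => z.1 ⟨i, j⟩) hpzi
    have hzj' : z.1 ⟨i, j'⟩ = 1 := le_antisymm (z01 _) hj'
    have hj'jj : j' ≠ jj := fun hh => by rw [hh] at hzj'; omega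
    have hwj' : w.1 ⟨i, j'⟩ = 0 := by
      have := pair_le_pi0 w.1 i hj'jj
      have := hpw1 i
      omega
    -- find z' in the support of b covering ⟨i,jj⟩
    have hAFpos : AF (expandSet α (bases M)) b ⟨i, jj⟩ ≠ 0 := by
      have := hW ⟨i, jj⟩; omega
    obtain ⟨z', hz's, hz'0⟩ := exists_support_entry_pos hAFpos
    have hz'jj : z'.1 ⟨i, jj⟩ = 1 := le_antisymm (entry_le_one hmat z' _) (by omega)
    have hzz' : z ≠ z' := fun hh => by rw [← hh] at hz'jj; omega
    have hz'j' : z'.1 ⟨i, j'⟩ = 0 := by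
      have := pair_le_pi0 z'.1 i hj'jj
      have := hmat (pi0 α z'.1) (projE α M z').2 i
      omega
    have ht12 : (⟨i, j'⟩ : (i' : Fin n) × Fin (α i')) ≠ ⟨i, jj⟩ := by
      simp [Sigma.mk.inj_iff, hj'jj]
    -- the two swapped vectors
    have hkeyz : pi0 α (expSwap z.1 ⟨i, j'⟩ ⟨i, jj⟩) = pi0 α z.1 := by
      rw [pi0_expSwap_s5 z.1 ⟨i, j'⟩ ⟨i, jj⟩ (by omega)]
      exact expSwap_self (pi0 α z.1) i (by omega)
    have hkeyz' : pi0 α (expSwap z'.1 ⟨i, jj⟩ ⟨i, j'⟩) = pi0 α z'.1 := by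
      rw [pi0_expSwap_s5 z'.1 ⟨i, jj⟩ ⟨i, j'⟩ (by omega)]
      exact expSwap_self (pi0 α z'.1) i (by
        have := entry_le_pi0 z'.1 i jj; omega)
    have hV₁mem : expSwap z.1 ⟨i, j'⟩ ⟨i, jj⟩ ∈ expandSet α (bases M) := by
      show pi0 α (expSwap z.1 ⟨i, j'⟩ ⟨i, jj⟩) ∈ bases M
      rw [hkeyz]; exact (projE α M z).2
    have hV₂mem : expSwap z'.1 ⟨i, jj⟩ ⟨i, j'⟩ ∈ expandSet α (bases M) := by
      show pi0 α (expSwap z'.1 ⟨i, jj⟩ ⟨i, j'⟩) ∈ bases M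
      rw [hkeyz']; exact (projE α M z').2
    set sz : ↥(expandSet α (bases M)) := ⟨expSwap z.1 ⟨i, j'⟩ ⟨i, jj⟩, hV₁mem⟩ with hsz
    set sz' : ↥(expandSet α (bases M)) := ⟨expSwap z'.1 ⟨i, jj⟩ ⟨i, j'⟩, hV₂mem⟩ with hsz'
    set c := b - Finsupp.single z 1 - Finsupp.single z' 1 with hc
    have hdecomp : b = Finsupp.single z 1 + Finsupp.single z' 1 + c :=
      two_decomp (Finsupp.mem_support_iff.mp hz) (Finsupp.mem_support_iff.mp hz's) hzz'
    set b'' := Finsupp.single sz 1 + Finsupp.single sz' 1 + c with hb''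
    have hstep : SwapStep (expandSet α (bases M)) b b'' := by
      refine ⟨z, z', sz, sz', ⟨i, j'⟩, ⟨i, jj⟩, c, ?_, ?_, rfl, rfl, hdecomp, rfl⟩
      · show z'.1 ⟨i, j'⟩ < z.1 ⟨i, j'⟩
        omega
      · show z.1 ⟨i, jj⟩ < z'.1 ⟨i, jj⟩
        omega
    have hprojsz : projE α M sz = projE α M z := Subtype.ext hkeyz
    have hprojsz' : projE α M sz' = projE α M z' := Subtype.ext hkeyz'
    have hΦ : Finsupp.mapDomain (projE α M) b'' = Finsupp.mapDomain (projE α M) b := by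
      rw [hb'', hdecomp]
      simp only [Finsupp.mapDomain_add, Finsupp.mapDomain_single, hprojsz, hprojsz']
    have hAFeq : AF (expandSet α (bases M)) b'' = AF (expandSet α (bases M)) b := by
      rw [hb'']
      conv_rhs => rw [hdecomp]
      rw [AF_add, AF_add, AF_add, AF_add, AF_single, AF_single, AF_single, AF_single]
      congr 1
      simp only [one_smul]
      ext t
      simp only [Finsupp.add_apply, Finsupp.coe_equivFunOnFinite_symm]
      exact expSwap_add_expSwap' z.1 z'.1 ⟨i, j'⟩ ⟨i, jj⟩ (by omega) (by omega) t
    have hszsupp : sz ∈ b''.support := by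
      rw [Finsupp.mem_support_iff, hb'']
      simp only [Finsupp.add_apply, Finsupp.single_eq_same]
      omega
    -- the distance decreases by 2
    have hval₁ : sz.1 ⟨i, j'⟩ = 0 := by
      show expSwap z.1 ⟨i, j'⟩ ⟨i, jj⟩ ⟨i, j'⟩ = 0
      unfold expSwap
      rw [if_pos rfl, if_neg ht12]
      omega
    have hval₂ : sz.1 ⟨i, jj⟩ = 1 := by
      show expSwap z.1 ⟨i, j'⟩ ⟨i, jj⟩ ⟨i, jj⟩ = 1
      unfold expSwap
      rw [if_pos rfl, if_neg (Ne.symm ht12)]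
      omega
    have hdist : distT (α := α) w.1 sz.1 + 2 = distT (α := α) w.1 z.1 := by
      rw [distT, distT,
        sum_split_two (fun t => (w.1 t - sz.1 t) + (sz.1 t - w.1 t)) ht12,
        sum_split_two (fun t => (w.1 t - z.1 t) + (z.1 t - w.1 t)) ht12]

      have htail : ∑ t ∈ (Finset.univ.erase (⟨i, j'⟩ : (i' : Fin n) × Fin (α i'))).erase ⟨i, jj⟩,
            ((w.1 t - sz.1 t) + (sz.1 t - w.1 t))
          = ∑ t ∈ (Finset.univ.erase (⟨i, j'⟩ : (i' : Fin n) × Fin (α i'))).erase ⟨i, jj⟩,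
            ((w.1 t - z.1 t) + (z.1 t - w.1 t)) := by
        refine Finset.sum_congr rfl fun t ht => ?_
        rw [Finset.mem_erase, Finset.mem_erase] at ht
        have : sz.1 t = z.1 t := by
          show expSwap z.1 ⟨i, j'⟩ ⟨i, jj⟩ t = z.1 t
          unfold expSwap
          rw [if_neg ht.2.1, if_neg ht.1]
          omega
        rw [this]
      rw [htail]
      omega
    obtain ⟨b', hb'eqv, hb'Φ, hb'AF, hb'w⟩ :=
      ih b'' w sz hszsupp (hprojsz.trans hproj)
        (fun t => by rw [hAFeq]; exact hW t) (by omega)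
    exact ⟨b', (Relation.EqvGen.rel _ _ hstep).trans _ _ _ hb'eqv,
      by rw [hb'Φ, hΦ], by rw [hb'AF, hAFeq], hb'w⟩

end Gen6
section Gen7
open MvPolynomial Relation Finsupp
variable {n : ℕ} {α : Fin n → ℕ} {M : Set (Fin n → ℕ)}

theorem fiber (hmat : ∀ u ∈ bases M, ∀ i, u i ≤ 1) :
    ∀ (m : ℕ) (a b : ↥(expandSet α (bases M)) →₀ ℕ), degF a ≤ m →
      Finsupp.mapDomain (projE α M) a = Finsupp.mapDomain (projE α M) b →
      AF (expandSet α (bases M)) a = AF (expandSet α (bases M)) b →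
      Relation.EqvGen (SwapStep (expandSet α (bases M))) a b := by
  intro m
  induction m with
  | zero =>
    intro a b hdeg hproj hAF
    have ha : a = 0 := eq_zero_of_degF (Nat.le_zero.mp hdeg)
    have hb : b = 0 := by
      apply eq_zero_of_degF
      have h1 : degF (Finsupp.mapDomain (projE α M) b)
          = degF (Finsupp.mapDomain (projE α M) a) := by rw [hproj]
      rw [degF_mapDomain, degF_mapDomain, ha] at h1
      rw [h1]
      exact Finsupp.sum_zero_index
    rw [ha, hb]
    exact Relation.EqvGen.refl _
  | succ m ih =>
    intro a b hdeg hproj hAF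
    by_cases ha0 : a = 0
    · have hb : b = 0 := by
        apply eq_zero_of_degF
        have h1 : degF (Finsupp.mapDomain (projE α M) b)
            = degF (Finsupp.mapDomain (projE α M) a) := by rw [hproj]
        rw [degF_mapDomain, degF_mapDomain, ha0] at h1
        rw [h1]
        exact Finsupp.sum_zero_index
      rw [ha0, hb]
      exact Relation.EqvGen.refl _
    · obtain ⟨w, hw⟩ := Finsupp.support_nonempty_iff.mpr ha0
      have hΦw : Finsupp.mapDomain (projE α M) b (projE α M w) ≠ 0 := by
        rw [← hproj]; exact mapDomain_apply_ne_zero hw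
      obtain ⟨z, hzs, hzp⟩ := exists_preimage_of_mapDomain hΦw
      have hWt : ∀ t, (w.1 : _ → ℕ) t ≤ AF (expandSet α (bases M)) b t := fun t => by
        rw [← hAF]; exact le_AF_of_mem_support hw t
      obtain ⟨b', hb'eqv, hb'Φ, hb'AF, hb'w⟩ :=
        reach hmat (distT (α := α) w.1 z.1) b w z hzs hzp hWt le_rfl
      set a₀ := a - Finsupp.single w 1 with ha₀
      set b₀ := b' - Finsupp.single w 1 with hb₀
      have hadec : a = Finsupp.single w 1 + a₀ :=
        one_decomp (Finsupp.mem_support_iff.mp hw)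
      have hbdec : b' = Finsupp.single w 1 + b₀ :=
        one_decomp (Finsupp.mem_support_iff.mp hb'w)
      have hproj' : Finsupp.mapDomain (projE α M) a₀ = Finsupp.mapDomain (projE α M) b₀ := by
        have h1 : Finsupp.mapDomain (projE α M) a = Finsupp.mapDomain (projE α M) b' := by
          rw [hproj, ← hb'Φ]
        rw [hadec, hbdec, Finsupp.mapDomain_add, Finsupp.mapDomain_add] at h1
        exact add_left_cancel h1
      have hAF' : AF (expandSet α (bases M)) a₀ = AF (expandSet α (bases M)) b₀ := by
        have h1 : AF (expandSet α (bases M)) a = AF (expandSet α (bases M)) b' := by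
          rw [hAF, ← hb'AF]
        rw [hadec, hbdec, AF_add, AF_add] at h1
        exact add_left_cancel h1
      have hdeg' : degF a₀ ≤ m := by
        have h1 : degF a = 1 + degF a₀ := by rw [hadec, degF_add, degF_single]
        omega
      have hmain := ih a₀ b₀ hdeg' hproj' hAF'
      have h2 : Relation.EqvGen (SwapStep (expandSet α (bases M))) a b' := by
        rw [hadec, hbdec]
        have h3 := eqvGen_swapStep_add hmain (Finsupp.single w 1)
        rwa [add_comm a₀, add_comm b₀] at h3
      exact h2.trans _ _ _ (Relation.EqvGen.symm _ _ hb'eqv)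

theorem liftRTG (hmat : ∀ u ∈ bases M, ∀ i, u i ≤ 1) :
    ∀ (p q : ↥(bases M) →₀ ℕ), Relation.ReflTransGen (SwapStep (bases M)) p q →
      ∀ (a b : ↥(expandSet α (bases M)) →₀ ℕ),
        Finsupp.mapDomain (projE α M) a = p → Finsupp.mapDomain (projE α M) b = q →
        AF (expandSet α (bases M)) a = AF (expandSet α (bases M)) b →
        Relation.EqvGen (SwapStep (expandSet α (bases M))) a b := by
  intro p q hrtg
  induction hrtg using Relation.ReflTransGen.head_induction_on with
  | refl =>
    intro a b hpa hpb hAF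
    exact fiber hmat (degF a) a b le_rfl (by rw [hpa, hpb]) hAF
  | head hstep htail ih =>
    intro a b hpa hpb hAF
    obtain ⟨u₁, u₂, v₁, v₂, i, j, c, h1, h2, h3, h4, hp, hmid⟩ := hstep
    have hu12 : u₁ ≠ u₂ := fun hh => by rw [hh] at h1; omega
    have hpu₁ : Finsupp.mapDomain (projE α M) a u₁ ≠ 0 := by
      rw [hpa, hp]
      simp only [Finsupp.add_apply, Finsupp.single_eq_same]
      omega
    have hpu₂ : Finsupp.mapDomain (projE α M) a u₂ ≠ 0 := by
      rw [hpa, hp]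
      simp only [Finsupp.add_apply, Finsupp.single_eq_same]
      omega
    obtain ⟨w₁, hw₁s, hw₁p⟩ := exists_preimage_of_mapDomain hpu₁
    obtain ⟨w₂, hw₂s, hw₂p⟩ := exists_preimage_of_mapDomain hpu₂
    have hw12 : w₁ ≠ w₂ := fun hh => hu12 (by rw [← hw₁p, ← hw₂p, hh])
    have hu1i : u₁.1 i = 1 := le_antisymm (hmat u₁.1 u₁.2 i) (by omega)
    have hu2i : u₂.1 i = 0 := by have := hmat u₁.1 u₁.2 i; omega
    have hu2j : u₂.1 j = 1 := le_antisymm (hmat u₂.1 u₂.2 j) (by omega)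
    have hu1j : u₁.1 j = 0 := by have := hmat u₂.1 u₂.2 j; omega
    have hij : i ≠ j := by rintro rfl; omega
    have hpiw₁ : pi0 α w₁.1 = u₁.1 := congrArg Subtype.val hw₁p
    have hpiw₂ : pi0 α w₂.1 = u₂.1 := congrArg Subtype.val hw₂p
    obtain ⟨j₀, hj₀⟩ := sum_pos_exists (f := fun jx => w₁.1 ⟨i, jx⟩)
      (by show 1 ≤ pi0 α w₁.1 i; rw [hpiw₁]; omega)
    have hw₁ij₀ : w₁.1 ⟨i, j₀⟩ = 1 := le_antisymm (entry_le_one hmat w₁ _) hj₀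
    obtain ⟨j₁, hj₁⟩ := sum_pos_exists (f := fun jx => w₂.1 ⟨j, jx⟩)
      (by show 1 ≤ pi0 α w₂.1 j; rw [hpiw₂]; omega)
    have hw₂jj₁ : w₂.1 ⟨j, j₁⟩ = 1 := le_antisymm (entry_le_one hmat w₂ _) hj₁
    have hw₂ij₀ : w₂.1 ⟨i, j₀⟩ = 0 := by
      have hle := entry_le_pi0 w₂.1 i j₀
      rw [hpiw₂] at hle
      omega
    have hw₁jj₁ : w₁.1 ⟨j, j₁⟩ = 0 := by
      have hle := entry_le_pi0 w₁.1 j j₁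
      rw [hpiw₁] at hle
      omega
    have hW₁ : pi0 α (expSwap w₁.1 ⟨i, j₀⟩ ⟨j, j₁⟩) = v₁.1 := by
      rw [pi0_expSwap_s5 _ _ _ (by omega), hpiw₁]
      exact h3.symm
    have hW₂ : pi0 α (expSwap w₂.1 ⟨j, j₁⟩ ⟨i, j₀⟩) = v₂.1 := by
      rw [pi0_expSwap_s5 _ _ _ (by omega), hpiw₂]
      exact h4.symm
    have hW₁mem : expSwap w₁.1 ⟨i, j₀⟩ ⟨j, j₁⟩ ∈ expandSet α (bases M) := by
      show pi0 α _ ∈ bases M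
      rw [hW₁]; exact v₁.2
    have hW₂mem : expSwap w₂.1 ⟨j, j₁⟩ ⟨i, j₀⟩ ∈ expandSet α (bases M) := by
      show pi0 α _ ∈ bases M
      rw [hW₂]; exact v₂.2
    set sW₁ : ↥(expandSet α (bases M)) := ⟨expSwap w₁.1 ⟨i, j₀⟩ ⟨j, j₁⟩, hW₁mem⟩ with hsW₁
    set sW₂ : ↥(expandSet α (bases M)) := ⟨expSwap w₂.1 ⟨j, j₁⟩ ⟨i, j₀⟩, hW₂mem⟩ with hsW₂
    set c' := a - Finsupp.single w₁ 1 - Finsupp.single w₂ 1 with hc'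
    have hadec : a = Finsupp.single w₁ 1 + Finsupp.single w₂ 1 + c' :=
      two_decomp (Finsupp.mem_support_iff.mp hw₁s) (Finsupp.mem_support_iff.mp hw₂s) hw12
    set a' := Finsupp.single sW₁ 1 + Finsupp.single sW₂ 1 + c' with ha'
    have hstep' : SwapStep (expandSet α (bases M)) a a' := by
      refine ⟨w₁, w₂, sW₁, sW₂, ⟨i, j₀⟩, ⟨j, j₁⟩, c', ?_, ?_, rfl, rfl, hadec, rfl⟩
      · show w₂.1 ⟨i, j₀⟩ < w₁.1 ⟨i, j₀⟩
        omega
      · show w₁.1 ⟨j, j₁⟩ < w₂.1 ⟨j, j₁⟩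
        omega
    have hΦc' : Finsupp.mapDomain (projE α M) c' = c := by
      have h5 : Finsupp.mapDomain (projE α M) a
          = Finsupp.single u₁ 1 + Finsupp.single u₂ 1
            + Finsupp.mapDomain (projE α M) c' := by
        conv_lhs => rw [hadec]
        rw [Finsupp.mapDomain_add, Finsupp.mapDomain_add, Finsupp.mapDomain_single,
          Finsupp.mapDomain_single, hw₁p, hw₂p]
      rw [hpa, hp] at h5
      exact (add_left_cancel h5).symm
    have hΦa' : Finsupp.mapDomain (projE α M) a'
        = Finsupp.single v₁ 1 + Finsupp.single v₂ 1 + c := by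
      rw [ha', Finsupp.mapDomain_add, Finsupp.mapDomain_add, Finsupp.mapDomain_single,
        Finsupp.mapDomain_single, hΦc']
      congr 2
      · exact congrArg (fun x => Finsupp.single x 1) (Subtype.ext hW₁)
      · exact congrArg (fun x => Finsupp.single x 1) (Subtype.ext hW₂)
    have hAFa' : AF (expandSet α (bases M)) a' = AF (expandSet α (bases M)) a := by
      rw [ha']
      conv_rhs => rw [hadec]
      rw [AF_add, AF_add, AF_add, AF_add, AF_single, AF_single, AF_single, AF_single]
      congr 1
      simp only [one_smul]
      ext t
      simp only [Finsupp.add_apply, Finsupp.coe_equivFunOnFinite_symm]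
      exact expSwap_add_expSwap' w₁.1 w₂.1 ⟨i, j₀⟩ ⟨j, j₁⟩ (by omega) (by omega) t
    have hrest := ih a' b (by rw [hΦa', hmid]) hpb (by rw [hAFa']; exact hAF)
    exact (Relation.EqvGen.rel _ _ hstep').trans _ _ _ hrest

end Gen7
section Gen8
open MvPolynomial Relation Finsupp
variable {n : ℕ} {α : Fin n → ℕ} {M : Set (Fin n → ℕ)}

theorem mapDomain_fst_equivFun (wv : ((i : Fin n) × Fin (α i)) → ℕ) :
    Finsupp.mapDomain Sigma.fst (Finsupp.equivFunOnFinite.symm wv)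
      = Finsupp.equivFunOnFinite.symm (pi0 α wv) := by
  classical
  ext i
  rw [mapDomain_apply_eq]
  have h1 : ∑ t ∈ (Finsupp.equivFunOnFinite.symm wv).support,
        (if t.1 = i then (Finsupp.equivFunOnFinite.symm wv) t else 0)
      = ∑ t : (i' : Fin n) × Fin (α i'), (if t.1 = i then wv t else 0) := by
    rw [Finset.sum_subset (Finset.subset_univ _)]
    · exact Finset.sum_congr rfl fun t _ => by
        simp [Finsupp.coe_equivFunOnFinite_symm]
    · intro t _ ht
      have : wv t = 0 := by
        by_contra h0
        exact ht (Finsupp.mem_support_iff.mpr (by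
          simpa [Finsupp.coe_equivFunOnFinite_symm] using h0))
      simp [Finsupp.coe_equivFunOnFinite_symm, this]
  rw [h1, ← Finset.univ_sigma_univ, Finset.sum_sigma]
  have h2 : ∑ i' : Fin n, ∑ jx : Fin (α i'),
        (if i' = i then wv ⟨i', jx⟩ else 0)
      = ∑ i' : Fin n, (if i' = i then pi0 α wv i' else 0) := by
    refine Finset.sum_congr rfl fun i' _ => ?_
    split_ifs with hii
    · rfl
    · exact Finset.sum_eq_zero fun _ _ => rfl
  rw [h2, Finset.sum_ite_eq' Finset.univ i (fun i' => pi0 α wv i')]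
  simp [Finsupp.coe_equivFunOnFinite_symm]

theorem AF_proj (a : ↥(expandSet α (bases M)) →₀ ℕ) :
    AF (bases M) (Finsupp.mapDomain (projE α M) a)
      = Finsupp.mapDomain Sigma.fst (AF (expandSet α (bases M)) a) := by
  classical
  induction a using Finsupp.induction with
  | zero => simp [AF_zero]
  | single_add w k a hw hk ihh =>
    rw [Finsupp.mapDomain_add, Finsupp.mapDomain_single, AF_add, AF_add, AF_single,
      AF_single, Finsupp.mapDomain_add, ihh]
    congr 1
    rw [Finsupp.mapDomain_smul, mapDomain_fst_equivFun]
    rfl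

theorem core_conn {K : Type*} [Field K] (hmat : ∀ u ∈ bases M, ∀ i, u i ≤ 1)
    (hWhite : toricIdeal K (bases M) = Ideal.span (doubleSwapBinomials K (bases M))) :
    ∀ a b : ↥(expandSet α (bases M)) →₀ ℕ,
      AF (expandSet α (bases M)) a = AF (expandSet α (bases M)) b →
      Relation.EqvGen (SwapStep (expandSet α (bases M))) a b := by
  intro a b hAF
  have hAFM : AF (bases M) (Finsupp.mapDomain (projE α M) a)
      = AF (bases M) (Finsupp.mapDomain (projE α M) b) := by
    rw [AF_proj, AF_proj, hAF]
  have hker : (monomial (Finsupp.mapDomain (projE α M) a) 1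
      - monomial (Finsupp.mapDomain (projE α M) b) 1 : MvPolynomial (bases M) K)
      ∈ toricIdeal K (bases M) := by
    show toricHom K (bases M) _ = 0
    rw [map_sub, toricHom_monomial, toricHom_monomial, hAFM, sub_self]
  rw [hWhite] at hker
  have hM := span_diff_eqvGen (K := K) hker
  have hrtg := eqvGen_of_symm (fun x y h => swapStep_symm hmat h) hM
  exact liftRTG hmat _ _ hrtg a b rfl rfl hAF

end Gen8
theorem expansion_satisfies_white_conjecture
    (n : ℕ) (K : Type*) [Field K] (α : Fin n → ℕ) (hα : ∀ i, 0 < α i)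
    (M : Set (Fin n → ℕ)) (hM : IsDiscretePolymatroid M)
    (hmatroid : ∀ u ∈ bases M, ∀ i, u i ≤ 1)
    (h : toricIdeal K (bases M) = Ideal.span (doubleSwapBinomials K (bases M))) :
    toricIdeal K (expandSet α (bases M))
      = Ideal.span (doubleSwapBinomials K (expandSet α (bases M))) := by
  apply le_antisymm
  · intro f hf
    exact ker_le_span (expandSet α (bases M)) (core_conn hmatroid h)
      f.support.card f le_rfl (RingHom.mem_ker.mp hf)
  · exact Ideal.span_le.mpr (swaps_subset_ker _)
end

section
/- Let A be a finite set of monomials in S = K[x_1,…,x_n] that is minimal with respect to divisibility, and let α, β ∈ ℕ^n with β ⪯ α (componentwise). Then K[A^β] is a combinatorial pure subring of K[A^α]; explicitly, with T = {x_{11},…,x_{1l_1},…,x_{n1},…,x_{nl_n}} for β = (l_1,…,l_n), one has (A^α)_T = A^β. -/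
/-- Extension by zero of an exponent vector on the variables of `S^β` to an
exponent vector on the variables of `S^α`, for `β ⪯ α`. -/
def extendZero {σ : Type*} {α β : σ → ℕ} (h : β ≤ α)
    (w : ((i : σ) × Fin (β i)) → ℕ) : ((i : σ) × Fin (α i)) → ℕ :=
  fun q => if h' : (q.2 : ℕ) < β q.1 then w ⟨q.1, ⟨(q.2 : ℕ), h'⟩⟩ else 0

lemma sum_trunc {a b : ℕ} (h : b ≤ a) (f : Fin a → ℕ)
    (h0 : ∀ j : Fin a, b ≤ (j : ℕ) → f j = 0) :
    ∑ j : Fin a, f j = ∑ j : Fin b, f (Fin.castLE h j) := by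
  set g : ℕ → ℕ := fun m => if hm : m < a then f ⟨m, hm⟩ else 0 with hg
  have h1 : ∑ j : Fin a, f j = ∑ m ∈ Finset.range a, g m := by
    rw [← Fin.sum_univ_eq_sum_range g a]
    refine Finset.sum_congr rfl fun j _ => ?_
    simp only [hg, dif_pos j.2]
  have h2 : ∑ j : Fin b, f (Fin.castLE h j) = ∑ m ∈ Finset.range b, g m := by
    rw [← Fin.sum_univ_eq_sum_range g b]
    refine Finset.sum_congr rfl fun j _ => ?_
    simp only [hg, dif_pos (lt_of_lt_of_le j.2 h)]
    rfl
  rw [h1, h2]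
  refine (Finset.sum_subset (Finset.range_subset_range.mpr h) fun m _ hm => ?_).symm
  simp only [Finset.mem_range, not_lt] at hm
  by_cases hma : m < a
  · simp only [hg, dif_pos hma]; exact h0 ⟨m, hma⟩ hm
  · simp only [hg, dif_neg hma]

theorem expansion_combinatorial_pure_subring
    (n : ℕ) (K : Type*) [Field K] (α β : Fin n → ℕ)
    (hβ : ∀ i, 0 < β i) (hβα : β ≤ α)
    (A : Set (Fin n → ℕ)) (hne : A.Nonempty) (hfin : A.Finite)
    (hmin : IsAntichain (· ≤ ·) A) :
    {w ∈ expandSet α A | ∀ q : (i : Fin n) × Fin (α i), β q.1 ≤ (q.2 : ℕ) → w q = 0}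
      = extendZero hβα '' expandSet β A := by
  ext w
  constructor
  · rintro ⟨hw, hsupp⟩
    refine ⟨fun q => w ⟨q.1, Fin.castLE (hβα q.1) q.2⟩, ?_, ?_⟩
    · show pi0 β _ ∈ A
      have : pi0 β (fun q : (i : Fin n) × Fin (β i) => w ⟨q.1, Fin.castLE (hβα q.1) q.2⟩)
          = pi0 α w := by
        funext i
        exact (sum_trunc (hβα i) (fun j => w ⟨i, j⟩)
          (fun j hj => hsupp ⟨i, j⟩ hj)).symm
      rw [this]; exact hw
    · funext q
      unfold extendZero
      by_cases h' : (q.2 : ℕ) < β q.1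
      · rw [dif_pos h']; rfl
      · rw [dif_neg h']
        exact (hsupp q (not_lt.mp h')).symm
  · rintro ⟨v, hv, rfl⟩
    constructor
    · show pi0 α _ ∈ A
      have : pi0 α (extendZero hβα v) = pi0 β v := by
        funext i
        simp only [pi0]
        refine (sum_trunc (hβα i) (fun j => extendZero hβα v ⟨i, j⟩)
          (fun j hj => by unfold extendZero; simp only; rw [dif_neg (not_lt.mpr hj)])).trans ?_
        refine Finset.sum_congr rfl fun j _ => ?_
        unfold extendZero
        simp only
        rw [dif_pos (by simp)]
        rfl
      rw [this]; exact hv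
    · intro q hq
      unfold extendZero
      rw [dif_neg (not_lt.mpr hq)]
end

section
/- Let A be a finite set of monomials in S = K[x_1,…,x_n], let α = (k_1,…,k_n) ∈ ℕ^n, and set β = α + ε_i and γ = 1 + ε_{ik_i} ∈ ℕ^{|α|} (where 1 is the all-ones vector of length |α|). Then there exists a K-algebra isomorphism φ : K[(A^α)^γ] → K[A^β], induced by the relabeling of variables sending x_{rst} to x_{rs} if t = 1 and to x_{i(k_i+1)} if t = 2. -/
/-!
Statement 8: for `β = α + ε_i` and `γ = 1 + ε_{i k_i}`, there is a `K`-algebra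
isomorphism `K[(A^α)^γ] ≅ K[A^β]` induced by the relabeling of the variables
sending `x_{rst}` to `x_{rs}` if `t = 1` and to `x_{i(k_i+1)}` if `t = 2`.
-/

open MvPolynomial

/-- The toric ring `K[A]` generated by the monomials with exponent vectors
in `A`. -/
noncomputable def toricRing (K : Type*) [Field K] {σ : Type*} [Fintype σ]
    (A : Set (σ → ℕ)) : Subalgebra K (MvPolynomial σ K) :=
  Algebra.adjoin K ((fun u => monomial (Finsupp.equivFunOnFinite.symm u) (1 : K)) '' A)

section

variable {n : ℕ} (α : Fin n → ℕ) (i : Fin n) (hα : ∀ j, 0 < α j)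

/-- `β = α + ε_i`. -/
def betaVec : Fin n → ℕ := fun j => α j + (if j = i then 1 else 0)

/-- `γ = 1 + ε_{i k_i} ∈ ℕ^{|α|}`: duplicate the last variable `x_{i k_i}`. -/
def gammaVec : ((j : Fin n) × Fin (α j)) → ℕ :=
  fun q =>
    if q = (⟨i, ⟨α i - 1, Nat.sub_lt (hα i) one_pos⟩⟩ : (j : Fin n) × Fin (α j)) then 2 else 1

/-- The relabeling of the variables: `x_{rst} ↦ x_{rs}` if `t = 1` and
`x_{rst} ↦ x_{i(k_i+1)}` if `t = 2`. -/
def relabel : ((q : (j : Fin n) × Fin (α j)) × Fin (gammaVec α i hα q)) →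
    ((j : Fin n) × Fin (betaVec α i j)) :=
  fun p =>
    if (p.2 : ℕ) = 0 then
      ⟨p.1.1, ⟨(p.1.2 : ℕ), Nat.lt_of_lt_of_le p.1.2.2 (Nat.le_add_right _ _)⟩⟩
    else
      ⟨i, ⟨α i, by simp [betaVec]⟩⟩


-- auxiliary lemmas
lemma gamma_pos (q) : 0 < gammaVec α i hα q := by unfold gammaVec; split <;> omega

lemma gamma_lt {q} {t : Fin (gammaVec α i hα q)} (h : (t : ℕ) ≠ 0) :
    q = (⟨i, ⟨α i - 1, Nat.sub_lt (hα i) one_pos⟩⟩ : (j : Fin n) × Fin (α j)) ∧ (t : ℕ) = 1 := by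
  by_cases hq : q = (⟨i, ⟨α i - 1, Nat.sub_lt (hα i) one_pos⟩⟩ : (j : Fin n) × Fin (α j))
  · refine ⟨hq, ?_⟩
    have ht := t.2
    simp only [gammaVec, if_pos hq] at ht
    omega
  · have ht := t.2
    simp only [gammaVec, if_neg hq] at ht
    omega

lemma relabel_fst (p) : (relabel α i hα p).1 = p.1.1 := by
  unfold relabel
  split
  · rfl
  · rename_i h
    obtain ⟨hq, -⟩ := gamma_lt α i hα h
    rw [hq]

def relabelInv : ((j : Fin n) × Fin (betaVec α i j)) →
    ((q : (j : Fin n) × Fin (α j)) × Fin (gammaVec α i hα q)) :=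
  fun y =>
    if h : (y.2 : ℕ) < α y.1 then ⟨⟨y.1, ⟨y.2, h⟩⟩, ⟨0, gamma_pos α i hα _⟩⟩
    else ⟨⟨i, ⟨α i - 1, Nat.sub_lt (hα i) one_pos⟩⟩, ⟨1, by simp [gammaVec]⟩⟩

def relabelEquiv : ((q : (j : Fin n) × Fin (α j)) × Fin (gammaVec α i hα q)) ≃
    ((j : Fin n) × Fin (betaVec α i j)) where
  toFun := relabel α i hα
  invFun := relabelInv α i hα
  left_inv := by
    rintro ⟨q, t⟩
    by_cases h : (t : ℕ) = 0
    · have ht : t = ⟨0, gamma_pos α i hα q⟩ := Fin.ext h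
      rw [ht]
      have h1 : relabel α i hα ⟨q, ⟨0, gamma_pos α i hα q⟩⟩
          = ⟨q.1, ⟨(q.2 : ℕ), Nat.lt_of_lt_of_le q.2.2 (Nat.le_add_right _ _)⟩⟩ := by
        simp [relabel]
      rw [h1]
      have h2 : relabelInv α i hα
          ⟨q.1, ⟨(q.2 : ℕ), Nat.lt_of_lt_of_le q.2.2 (Nat.le_add_right _ _)⟩⟩
          = ⟨⟨q.1, ⟨(q.2 : ℕ), q.2.2⟩⟩, ⟨0, gamma_pos α i hα _⟩⟩ := by
        simp only [relabelInv]
        rw [dif_pos q.2.2]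
      rw [h2]
    · obtain ⟨hq, ht'⟩ := gamma_lt α i hα h
      have h1 : relabel α i hα ⟨q, t⟩ = ⟨i, ⟨α i, by simp [betaVec]⟩⟩ := by
        simp [relabel, h]
      rw [h1]
      have h2 : relabelInv α i hα ⟨i, ⟨α i, by simp [betaVec]⟩⟩
          = ⟨⟨i, ⟨α i - 1, Nat.sub_lt (hα i) one_pos⟩⟩, ⟨1, by simp [gammaVec]⟩⟩ := by
        simp only [relabelInv]
        rw [dif_neg (by simp)]
      rw [h2]
      subst hq
      exact (congrArg
        (fun t' => (⟨⟨i, ⟨α i - 1, Nat.sub_lt (hα i) one_pos⟩⟩, t'⟩ :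
          (q : (j : Fin n) × Fin (α j)) × Fin (gammaVec α i hα q)))
        (Fin.ext ht' : t = ⟨1, by simp [gammaVec]⟩)).symm
  right_inv := by
    rintro ⟨j, s⟩
    by_cases h : (s : ℕ) < α j
    · have h2 : relabelInv α i hα ⟨j, s⟩ = ⟨⟨j, ⟨(s : ℕ), h⟩⟩, ⟨0, gamma_pos α i hα _⟩⟩ := by
        simp only [relabelInv]
        rw [dif_pos h]
      rw [h2]
      have h1 : relabel α i hα ⟨⟨j, ⟨(s : ℕ), h⟩⟩, ⟨0, gamma_pos α i hα _⟩⟩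
          = ⟨j, ⟨(s : ℕ), Nat.lt_of_lt_of_le h (Nat.le_add_right _ _)⟩⟩ := by
        simp [relabel]
      rw [h1]
    · have hs := s.2
      simp only [betaVec] at hs
      have hj : j = i := by by_contra hj; simp [hj] at hs; omega
      subst hj
      have hs' : (s : ℕ) = α j := by simp at hs; omega
      have h2 : relabelInv α j hα ⟨j, s⟩
          = ⟨⟨j, ⟨α j - 1, Nat.sub_lt (hα j) one_pos⟩⟩, ⟨1, by simp [gammaVec]⟩⟩ := by
        simp only [relabelInv]
        rw [dif_neg h]
      rw [h2]
      have h1 : relabel α j hα ⟨⟨j, ⟨α j - 1, Nat.sub_lt (hα j) one_pos⟩⟩,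
          ⟨1, by simp [gammaVec]⟩⟩ = ⟨j, ⟨α j, by simp [betaVec]⟩⟩ := by
        simp [relabel]
      rw [h1]
      exact Sigma.ext rfl (heq_of_eq (Fin.ext (by simp [hs'])))

lemma sum_fiber {ι : Type*} [Fintype ι] [DecidableEq ι] (m : ι → ℕ)
    (f : ((j : ι) × Fin (m j)) → ℕ) (j : ι) :
    ∑ y : (j' : ι) × Fin (m j'), (if y.1 = j then f y else 0) = ∑ s : Fin (m j), f ⟨j, s⟩ := by
  rw [← Finset.univ_sigma_univ, Finset.sum_sigma]
  rw [Finset.sum_eq_single j]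
  · simp
  · intro b _ hb; simp [hb]
  · simp

lemma pi0_comp (u : ((q : (j : Fin n) × Fin (α j)) × Fin (gammaVec α i hα q)) → ℕ) :
    pi0 (betaVec α i) (u ∘ (relabelEquiv α i hα).symm) = pi0 α (pi0 (gammaVec α i hα) u) := by
  funext j
  have lhs : pi0 (betaVec α i) (u ∘ (relabelEquiv α i hα).symm) j
      = ∑ p : (q : (j : Fin n) × Fin (α j)) × Fin (gammaVec α i hα q),
          (if p.1.1 = j then u p else 0) := by
    simp only [pi0, Function.comp_apply]
    rw [← sum_fiber (betaVec α i) (fun y => u ((relabelEquiv α i hα).symm y)) j,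
      ← Equiv.sum_comp (relabelEquiv α i hα)
        (fun y => if y.1 = j then u ((relabelEquiv α i hα).symm y) else 0)]
    refine Fintype.sum_congr _ _ fun p => ?_
    have h1 : ((relabelEquiv α i hα) p).1 = p.1.1 := relabel_fst α i hα p
    rw [h1, Equiv.symm_apply_apply]
  have rhs : pi0 α (pi0 (gammaVec α i hα) u) j
      = ∑ p : (q : (j : Fin n) × Fin (α j)) × Fin (gammaVec α i hα q),
          (if p.1.1 = j then u p else 0) := by
    simp only [pi0]
    rw [← sum_fiber α (fun q => ∑ t : Fin (gammaVec α i hα q), u ⟨q, t⟩) j]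
    rw [show (Finset.univ : Finset ((q : (j : Fin n) × Fin (α j)) × Fin (gammaVec α i hα q)))
        = Finset.univ.sigma fun _ => Finset.univ from (Finset.univ_sigma_univ).symm,
      Finset.sum_sigma]
    refine Fintype.sum_congr _ _ fun q => ?_
    by_cases hq : q.1 = j <;> simp [hq]
  rw [lhs, rhs]

end

theorem expansion_iterated_iso
    (n : ℕ) (K : Type*) [Field K] (α : Fin n → ℕ) (hα : ∀ j, 0 < α j) (i : Fin n)
    (A : Set (Fin n → ℕ)) (hne : A.Nonempty) (hfin : A.Finite)
    (hmin : IsAntichain (· ≤ ·) A) :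
    ∃ φ : toricRing K (expandSet (gammaVec α i hα) (expandSet α A)) ≃ₐ[K]
        toricRing K (expandSet (betaVec α i) A),
      ∀ x : toricRing K (expandSet (gammaVec α i hα) (expandSet α A)),
        (φ x : MvPolynomial ((j : Fin n) × Fin (betaVec α i j)) K)
          = rename (relabel α i hα)
              (x : MvPolynomial ((q : (j : Fin n) × Fin (α j)) × Fin (gammaVec α i hα q)) K) := by
  set e := relabelEquiv α i hα with he
  set ψ := renameEquiv K e with hψ
  have hmono : ∀ u, ψ ((monomial (Finsupp.equivFunOnFinite.symm u)) (1 : K))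
      = monomial (Finsupp.equivFunOnFinite.symm (u ∘ e.symm)) (1 : K) := by
    intro u
    rw [hψ, renameEquiv_apply, rename_monomial]
    refine congrArg (fun d => (monomial d) (1 : K)) ?_
    ext y
    rw [Finsupp.mapDomain_equiv_apply]
    simp
  have himg : (fun u => u ∘ ⇑e.symm) '' (expandSet (gammaVec α i hα) (expandSet α A))
      = expandSet (betaVec α i) A := by
    ext v
    constructor
    · rintro ⟨u, hu, rfl⟩
      have : pi0 (betaVec α i) (u ∘ ⇑e.symm) = pi0 α (pi0 (gammaVec α i hα) u) :=
        pi0_comp α i hα u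
      simpa [expandSet, this] using hu
    · intro hv
      refine ⟨v ∘ ⇑e, ?_, by funext p; simp⟩
      have h2 : (v ∘ ⇑e) ∘ ⇑e.symm = v := by funext p; simp
      have : pi0 (betaVec α i) ((v ∘ ⇑e) ∘ ⇑e.symm) = pi0 α (pi0 (gammaVec α i hα) (v ∘ ⇑e)) :=
        pi0_comp α i hα (v ∘ ⇑e)
      rw [h2] at this
      simpa [expandSet, ← this] using hv
  have hmap : Subalgebra.map ψ.toAlgHom
      (toricRing K (expandSet (gammaVec α i hα) (expandSet α A)))
      = toricRing K (expandSet (betaVec α i) A) := by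
    unfold toricRing
    rw [AlgHom.map_adjoin]
    congr 1
    rw [← Set.image_comp, ← himg, ← Set.image_comp]
    refine Set.image_congr fun u _ => ?_
    exact hmono u
  refine ⟨(Subalgebra.equivMapOfInjective _ ψ.toAlgHom ψ.injective).trans
    (Subalgebra.equivOfEq _ _ hmap), fun x => ?_⟩
  simp only [AlgEquiv.trans_apply, Subalgebra.equivOfEq_apply]
  show ψ.toAlgHom (x : MvPolynomial _ K) = _
  show ψ (x : MvPolynomial _ K) = _
  rw [hψ, renameEquiv_apply]
  rfl
end

section
/- Let α ∈ ℕ^n and let A = {u_1,…,u_m} be a set of monomials in S = K[x_1,…,x_n] minimal with respect to divisibility. Then A is sortable if and only if A^α is sortable. -/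
/-!
Statement 11: a set `A` of monomials of degree `d` is sortable if and only if
its expansion `A^α` is sortable.  Sorting is defined on exponent vectors: for
`u, v` of degree `d`, write `uv = x_{i₁} ⋯ x_{i_{2d}}` with the variables in
weakly increasing order and let `sort(u,v) = (u',v')` where `u'` collects the
odd positions and `v'` the even positions.  Equivalently, in terms of the
prefix sums of `w = u + v`, the first component gets the "ceiling halves".
The variables of `S` are ordered `x_1 ≤ … ≤ x_n` and those of `S^α` are
ordered lexicographically: `x_{11} ≤ x_{12} ≤ … ≤ x_{nk_n}`.
-/

section Sorting

variable {σ : Type*} [Fintype σ] (le : σ → σ → Prop) [DecidableRel le]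

/-- Sum of the exponents of `w` at the variables `≤ s` (w.r.t. `le`). -/
def prefLE (w : σ → ℕ) (s : σ) : ℕ :=
  ∑ t ∈ Finset.univ.filter (fun t => le t s), w t

/-- Sum of the exponents of `w` at the variables `< s` (w.r.t. `le`). -/
def prefLT [DecidableEq σ] (w : σ → ℕ) (s : σ) : ℕ :=
  ∑ t ∈ Finset.univ.filter (fun t => le t s ∧ t ≠ s), w t

/-- The first component of `sort`: the odd positions of the sorted variable
string of `w = u + v`. -/
def sortFst [DecidableEq σ] (w : σ → ℕ) : σ → ℕ :=
  fun s => (prefLE le w s + 1) / 2 - (prefLT le w s + 1) / 2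

/-- The second component of `sort`: the even positions of the sorted variable
string of `w = u + v`. -/
def sortSnd [DecidableEq σ] (w : σ → ℕ) : σ → ℕ :=
  fun s => prefLE le w s / 2 - prefLT le w s / 2

/-- `A` is sortable: the image of the sorting map lies in `A × A`. -/
def Sortable [DecidableEq σ] (A : Set (σ → ℕ)) : Prop :=
  ∀ u ∈ A, ∀ v ∈ A, sortFst le (u + v) ∈ A ∧ sortSnd le (u + v) ∈ A

end Sorting

/-- The (weak) lexicographic ordering of the variables of `S^α`:
`x_{11} ≤ x_{12} ≤ … ≤ x_{nk_n}`. -/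
def sigLE {n : ℕ} {α : Fin n → ℕ} (p q : (j : Fin n) × Fin (α j)) : Prop :=
  p.1 < q.1 ∨ (p.1 = q.1 ∧ (p.2 : ℕ) ≤ (q.2 : ℕ))

instance {n : ℕ} {α : Fin n → ℕ} : DecidableRel (@sigLE n α) :=
  fun _ _ => inferInstanceAs (Decidable (_ ∨ _))

-- Auxiliary lemmas

lemma pi0_add {σ : Type*} [Fintype σ] (α : σ → ℕ) (u v : ((i : σ) × Fin (α i)) → ℕ) :
    pi0 α (u + v) = pi0 α u + pi0 α v := by
  funext i; simp [pi0, Finset.sum_add_distrib]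

lemma prefLT_base (u : Fin n → ℕ) (i : Fin n) :
    prefLT (· ≤ ·) u i = ∑ t ∈ Finset.univ.filter (fun t => t < i), u t := by
  unfold prefLT
  congr 1
  apply Finset.filter_congr
  intro t _
  simp [lt_iff_le_and_ne]

lemma prefLE_base (u : Fin n → ℕ) (i : Fin n) :
    prefLE (· ≤ ·) u i = prefLT (· ≤ ·) u i + u i := by
  rw [prefLT_base]
  unfold prefLE
  have : Finset.univ.filter (fun t => t ≤ i) =
      insert i (Finset.univ.filter (fun t : Fin n => t < i)) := by
    ext t
    simp [le_iff_lt_or_eq, or_comm]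
  rw [this, Finset.sum_insert (by simp), add_comm]

-- the "partial prefix within block i up to position k" (k : ℕ)
def blk {n : ℕ} {α : Fin n → ℕ} (w : ((j : Fin n) × Fin (α j)) → ℕ) (i : Fin n) (k : ℕ) : ℕ :=
  ∑ j ∈ Finset.univ.filter (fun j : Fin (α i) => (j : ℕ) < k), w ⟨i, j⟩

lemma blk_mono {n : ℕ} {α : Fin n → ℕ} (w : ((j : Fin n) × Fin (α j)) → ℕ) (i : Fin n) :
    Monotone (blk w i) := by
  intro a b hab
  apply Finset.sum_le_sum_of_subset
  intro j hj
  simp only [Finset.mem_filter, Finset.mem_univ, true_and] at *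
  omega

lemma blk_top {n : ℕ} {α : Fin n → ℕ} (w : ((j : Fin n) × Fin (α j)) → ℕ) (i : Fin n) :
    blk w i (α i) = pi0 α w i := by
  unfold blk pi0
  rw [Finset.filter_true_of_mem (fun j _ => j.isLt)]

lemma sum_split {n : ℕ} (f : Fin n → ℕ) (i : Fin n) (B : ℕ) :
    (∑ i' : Fin n, if i' = i then B else if i' < i then f i' else 0)
      = (∑ t ∈ Finset.univ.filter (fun t => t < i), f t) + B := by
  rw [← Finset.add_sum_erase _ _ (Finset.mem_univ i), if_pos rfl]
  have h1 : ∀ x ∈ Finset.univ.erase i,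
      (if x = i then B else if x < i then f x else 0) = if x < i then f x else 0 :=
    fun x hx => if_neg (Finset.ne_of_mem_erase hx)
  rw [Finset.sum_congr rfl h1, Finset.sum_erase _ (by simp), ← Finset.sum_filter, add_comm]

lemma prefLE_sigma {n : ℕ} {α : Fin n → ℕ} (w : ((j : Fin n) × Fin (α j)) → ℕ)
    (i : Fin n) (j : Fin (α i)) :
    prefLE sigLE w ⟨i, j⟩ = prefLT (· ≤ ·) (pi0 α w) i + blk w i ((j : ℕ) + 1) := by
  rw [prefLT_base]
  unfold prefLE blk
  rw [Finset.sum_filter, ← Finset.univ_sigma_univ, Finset.sum_sigma]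
  have key : ∀ i' : Fin n,
      (∑ j' : Fin (α i'), if sigLE ⟨i', j'⟩ ⟨i, j⟩ then w ⟨i', j'⟩ else 0)
      = if i' = i then (∑ j' ∈ Finset.univ.filter (fun j' : Fin (α i) => (j' : ℕ) < (j : ℕ) + 1), w ⟨i, j'⟩)
        else if i' < i then pi0 α w i' else 0 := by
    intro i'
    rcases lt_trichotomy i' i with h | h | h
    · rw [if_neg (ne_of_lt h), if_pos h]
      unfold pi0
      exact Finset.sum_congr rfl (fun j' _ => if_pos (Or.inl h))
    · subst h
      rw [if_pos rfl, Finset.sum_filter]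
      apply Finset.sum_congr rfl
      intro j' _
      have : sigLE (⟨i', j'⟩ : (j : Fin n) × Fin (α j)) ⟨i', j⟩ ↔ (j' : ℕ) < (j : ℕ) + 1 := by
        unfold sigLE; simp
      simp only [this]
    · rw [if_neg (ne_of_gt h), if_neg (not_lt_of_gt h)]
      refine Finset.sum_eq_zero fun j' _ => if_neg fun hc => ?_
      unfold sigLE at hc
      rcases hc with h1 | ⟨h2, _⟩
      · exact absurd h1 (not_lt_of_gt h)
      · exact absurd h2 (ne_of_gt h)
  rw [Finset.sum_congr rfl (fun i' _ => key i'), sum_split]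

lemma prefLT_sigma {n : ℕ} {α : Fin n → ℕ} (w : ((j : Fin n) × Fin (α j)) → ℕ)
    (i : Fin n) (j : Fin (α i)) :
    prefLT sigLE w ⟨i, j⟩ = prefLT (· ≤ ·) (pi0 α w) i + blk w i (j : ℕ) := by
  rw [prefLT_base]
  unfold prefLT blk
  rw [Finset.sum_filter, ← Finset.univ_sigma_univ, Finset.sum_sigma]
  have key : ∀ i' : Fin n,
      (∑ j' : Fin (α i'), if sigLE ⟨i', j'⟩ ⟨i, j⟩ ∧ (⟨i', j'⟩ : (j : Fin n) × Fin (α j)) ≠ ⟨i, j⟩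
          then w ⟨i', j'⟩ else 0)
      = if i' = i then (∑ j' ∈ Finset.univ.filter (fun j' : Fin (α i) => (j' : ℕ) < (j : ℕ)), w ⟨i, j'⟩)
        else if i' < i then pi0 α w i' else 0 := by
    intro i'
    rcases lt_trichotomy i' i with h | h | h
    · rw [if_neg (ne_of_lt h), if_pos h]
      unfold pi0
      refine Finset.sum_congr rfl fun j' _ => if_pos ⟨Or.inl h, fun he => ?_⟩
      exact absurd (congrArg Sigma.fst he) (ne_of_lt h)
    · subst h
      rw [if_pos rfl, Finset.sum_filter]
      apply Finset.sum_congr rfl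
      intro j' _
      have : (sigLE (⟨i', j'⟩ : (j : Fin n) × Fin (α j)) ⟨i', j⟩ ∧
          (⟨i', j'⟩ : (j : Fin n) × Fin (α j)) ≠ ⟨i', j⟩) ↔ (j' : ℕ) < (j : ℕ) := by
        unfold sigLE
        simp [Sigma.mk.inj_iff, Fin.ext_iff]
        omega
      simp only [this]
    · rw [if_neg (ne_of_gt h), if_neg (not_lt_of_gt h)]
      refine Finset.sum_eq_zero fun j' _ => if_neg fun hc => ?_
      rcases hc.1 with h1 | ⟨h2, _⟩
      · exact absurd h1 (not_lt_of_gt h)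
      · exact absurd h2 (ne_of_gt h)
  rw [Finset.sum_congr rfl (fun i' _ => key i'), sum_split]

lemma blk_zero {n : ℕ} {α : Fin n → ℕ} (w : ((j : Fin n) × Fin (α j)) → ℕ) (i : Fin n) :
    blk w i 0 = 0 := by
  unfold blk
  simp

lemma pi0_sort_aux {n : ℕ} {α : Fin n → ℕ} (g : ℕ → ℕ) (hg : Monotone g)
    (w : ((j : Fin n) × Fin (α j)) → ℕ) (i : Fin n) :
    (∑ j : Fin (α i), (g (prefLE sigLE w ⟨i, j⟩) - g (prefLT sigLE w ⟨i, j⟩)))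
      = g (prefLE (· ≤ ·) (pi0 α w) i) - g (prefLT (· ≤ ·) (pi0 α w) i) := by
  set P := prefLT (· ≤ ·) (pi0 α w) i with hP
  set G : ℕ → ℕ := fun k => g (P + blk w i k) with hGdef
  have hG : Monotone G := fun a b hab => hg (Nat.add_le_add_left (blk_mono w i hab) P)
  have h1 : ∀ j : Fin (α i),
      g (prefLE sigLE w ⟨i, j⟩) - g (prefLT sigLE w ⟨i, j⟩) = G ((j : ℕ) + 1) - G (j : ℕ) := by
    intro j
    rw [prefLE_sigma, prefLT_sigma]
  rw [Finset.sum_congr rfl (fun j _ => h1 j)]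
  rw [Fin.sum_univ_eq_sum_range (fun k => G (k + 1) - G k) (α i)]
  rw [Finset.sum_range_tsub hG]
  have hG0 : G 0 = g P := by rw [hGdef]; simp [blk_zero]
  have hGtop : G (α i) = g (prefLE (· ≤ ·) (pi0 α w) i) := by
    rw [hGdef]
    simp only [blk_top, prefLE_base, hP]
  rw [hG0, hGtop]

lemma pi0_sortFst {n : ℕ} {α : Fin n → ℕ} (w : ((j : Fin n) × Fin (α j)) → ℕ) :
    pi0 α (sortFst sigLE w) = sortFst (· ≤ ·) (pi0 α w) := by
  funext i
  have := pi0_sort_aux (fun x => (x + 1) / 2)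
    (fun a b h => Nat.div_le_div_right (by omega)) w i
  simpa [pi0, sortFst] using this

lemma pi0_sortSnd {n : ℕ} {α : Fin n → ℕ} (w : ((j : Fin n) × Fin (α j)) → ℕ) :
    pi0 α (sortSnd sigLE w) = sortSnd (· ≤ ·) (pi0 α w) := by
  funext i
  have := pi0_sort_aux (fun x => x / 2)
    (fun a b h => Nat.div_le_div_right h) w i
  simpa [pi0, sortSnd] using this

def liftv {n : ℕ} (α : Fin n → ℕ) (u : Fin n → ℕ) : ((j : Fin n) × Fin (α j)) → ℕ :=
  fun p => if (p.2 : ℕ) = 0 then u p.1 else 0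

lemma pi0_liftv {n : ℕ} (α : Fin n → ℕ) (hα : ∀ i, 0 < α i) (u : Fin n → ℕ) :
    pi0 α (liftv α u) = u := by
  funext i
  unfold pi0 liftv
  rw [Finset.sum_eq_single_of_mem (⟨0, hα i⟩ : Fin (α i)) (Finset.mem_univ _)]
  · simp
  · intro b _ hb
    exact if_neg (by simpa [Fin.ext_iff] using hb)

theorem sortable_iff_expansion_sortable
    (n : ℕ) (K : Type*) [Field K] (α : Fin n → ℕ) (hα : ∀ i, 0 < α i)
    (A : Set (Fin n → ℕ)) (hne : A.Nonempty) (hfin : A.Finite)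
    (hmin : IsAntichain (· ≤ ·) A)
    (d : ℕ) (hd : ∀ u ∈ A, ∑ j, u j = d) :
    Sortable (· ≤ · : Fin n → Fin n → Prop) A ↔ Sortable sigLE (expandSet α A) := by
  constructor
  · intro hA u hu v hv
    have h1 : pi0 α u ∈ A := hu
    have h2 : pi0 α v ∈ A := hv
    obtain ⟨hf, hs⟩ := hA _ h1 _ h2
    constructor
    · show pi0 α (sortFst sigLE (u + v)) ∈ A
      rw [pi0_sortFst, pi0_add]
      exact hf
    · show pi0 α (sortSnd sigLE (u + v)) ∈ A
      rw [pi0_sortSnd, pi0_add]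
      exact hs
  · intro hE u hu v hv
    have h1 : liftv α u ∈ expandSet α A := by
      show pi0 α (liftv α u) ∈ A
      rw [pi0_liftv α hα]; exact hu
    have h2 : liftv α v ∈ expandSet α A := by
      show pi0 α (liftv α v) ∈ A
      rw [pi0_liftv α hα]; exact hv
    obtain ⟨hf, hs⟩ := hE _ h1 _ h2
    have hf' : pi0 α (sortFst sigLE (liftv α u + liftv α v)) ∈ A := hf
    have hs' : pi0 α (sortSnd sigLE (liftv α u + liftv α v)) ∈ A := hs
    rw [pi0_sortFst, pi0_add, pi0_liftv α hα, pi0_liftv α hα] at hf'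
    rw [pi0_sortSnd, pi0_add, pi0_liftv α hα, pi0_liftv α hα] at hs'
    exact ⟨hf', hs'⟩
end
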